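/- arXiv:1903.10577 — 7 statements merged into one kernel-verified Lean document; each statement's English description precedes it below -/
import Mathlib

section
/- In the logic Λ (an S5 modal logic for □ and for each [α], with the bridge axiom □p → [α]p and the independence-of-agency axiom ⋀ᵢ ◇[αᵢ]pᵢ → ◇(⋀ᵢ [αᵢ]pᵢ) for pairwise distinct agents), the following holds: if ⊢ ([α₁]φ₁ ∧ … ∧ [αₙ]φₙ) → ⊥ for pairwise distinct agents α₁,…,αₙ, and w is a maximal consistent set containing ◇[αᵢ]φᵢ for each i, then we reach a contradiction; i.e., the set {[α₁]φ₁, …, [αₙ]φₙ} is consistent whenever each ◇[αᵢ]φᵢ belongs to some maximal consistent set. -/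
/-- Formulas of the language `L_KO`, with operators `□`, `[α]`, `K_α`,
`⊙[α]` (objective ought) and `⊙_S[α]` (subjective ought). -/
inductive Form (Ags : Type) : Type
  | atom : Nat → Form Ags
  | bot  : Form Ags
  | imp  : Form Ags → Form Ags → Form Ags
  | box  : Form Ags → Form Ags
  | act  : Ags → Form Ags → Form Ags
  | know : Ags → Form Ags → Form Ags
  | obj  : Ags → Form Ags → Form Ags
  | subj : Ags → Form Ags → Form Ags

namespace Form

variable {Ags : Type}

def neg (φ : Form Ags) : Form Ags := imp φ bot
def dia (φ : Form Ags) : Form Ags := neg (box (neg φ))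
def conj (φ ψ : Form Ags) : Form Ags := neg (imp φ (neg ψ))
def disj (φ ψ : Form Ags) : Form Ags := imp (neg φ) ψ
def conjl : List (Form Ags) → Form Ags
  | [] => neg bot
  | φ :: l => conj φ (conjl l)

end Form

open Form

/-- The Hilbert-style proof system `Λ`. -/
inductive Prov {Ags : Type} : Form Ags → Prop
  | pl1 (φ ψ : Form Ags) : Prov (imp φ (imp ψ φ))
  | pl2 (φ ψ χ : Form Ags) :
      Prov (imp (imp φ (imp ψ χ)) (imp (imp φ ψ) (imp φ χ)))
  | pl3 (φ ψ : Form Ags) : Prov (imp (imp (neg φ) (neg ψ)) (imp ψ φ))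
  | mp {φ ψ : Form Ags} : Prov (imp φ ψ) → Prov φ → Prov ψ
  -- S5 axioms and necessitation for □
  | boxK (φ ψ : Form Ags) : Prov (imp (box (imp φ ψ)) (imp (box φ) (box ψ)))
  | boxT (φ : Form Ags) : Prov (imp (box φ) φ)
  | box4 (φ : Form Ags) : Prov (imp (box φ) (box (box φ)))
  | box5 (φ : Form Ags) : Prov (imp (dia φ) (box (dia φ)))
  | boxNec {φ : Form Ags} : Prov φ → Prov (box φ)
  -- S5 axioms and necessitation for [α]
  | actK (a : Ags) (φ ψ : Form Ags) :
      Prov (imp (act a (imp φ ψ)) (imp (act a φ) (act a ψ)))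
  | actT (a : Ags) (φ : Form Ags) : Prov (imp (act a φ) φ)
  | act4 (a : Ags) (φ : Form Ags) : Prov (imp (act a φ) (act a (act a φ)))
  | act5 (a : Ags) (φ : Form Ags) :
      Prov (imp (neg (act a φ)) (act a (neg (act a φ))))
  | actNec {φ : Form Ags} (a : Ags) : Prov φ → Prov (act a φ)
  -- S5 axioms and necessitation for K_α
  | knowK (a : Ags) (φ ψ : Form Ags) :
      Prov (imp (know a (imp φ ψ)) (imp (know a φ) (know a ψ)))
  | knowT (a : Ags) (φ : Form Ags) : Prov (imp (know a φ) φ)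
  | know4 (a : Ags) (φ : Form Ags) : Prov (imp (know a φ) (know a (know a φ)))
  | know5 (a : Ags) (φ : Form Ags) :
      Prov (imp (neg (know a φ)) (know a (neg (know a φ))))
  | knowNec {φ : Form Ags} (a : Ags) : Prov φ → Prov (know a φ)
  -- deontic-epistemic axioms
  | a1 (a : Ags) (φ ψ : Form Ags) :
      Prov (imp (obj a (imp φ ψ)) (imp (obj a φ) (obj a ψ)))
  | a2 (a : Ags) (φ : Form Ags) :
      Prov (imp (box φ) (conj (act a φ) (obj a φ)))
  | a3 (a : Ags) (φ : Form Ags) :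
      Prov (disj (box (obj a φ)) (box (neg (obj a φ))))
  | a4 (a : Ags) (φ : Form Ags) : Prov (imp (obj a φ) (obj a (act a φ)))
  | oic (a : Ags) (φ : Form Ags) : Prov (imp (obj a φ) (dia (act a φ)))
  | ia (l : List (Ags × Form Ags)) (h : l.Pairwise fun p q => p.1 ≠ q.1) :
      Prov (imp (conjl (l.map fun p => dia (act p.1 p.2)))
                (dia (conjl (l.map fun p => act p.1 p.2))))
  | a5 (a : Ags) (φ ψ : Form Ags) :
      Prov (imp (subj a (imp φ ψ)) (imp (subj a φ) (subj a ψ)))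
  | a6 (a : Ags) (φ : Form Ags) : Prov (imp (subj a φ) (subj a (know a φ)))
  | oacAx (a : Ags) (φ : Form Ags) : Prov (imp (know a φ) (act a φ))
  | unifH (a : Ags) (φ : Form Ags) :
      Prov (imp (dia (know a φ)) (know a (dia φ)))
  | sN (a : Ags) (φ : Form Ags) : Prov (imp (know a (box φ)) (subj a φ))
  | sOic (a : Ags) (φ : Form Ags) : Prov (imp (subj a φ) (dia (know a φ)))
  | clAx (a : Ags) (φ : Form Ags) :
      Prov (imp (subj a φ) (know a (box (subj a φ))))
  | objNec {φ : Form Ags} (a : Ags) : Prov φ → Prov (obj a φ)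
  | subjNec {φ : Form Ags} (a : Ags) : Prov φ → Prov (subj a φ)

/-- `Λ`-consistency of a set of formulas. -/
def Consistent {Ags : Type} (Γ : Set (Form Ags)) : Prop :=
  ¬ ∃ l : List (Form Ags), (∀ φ ∈ l, φ ∈ Γ) ∧ Prov (imp (conjl l) bot)

/-- Maximal `Λ`-consistent set. -/
def MCS {Ags : Type} (w : Set (Form Ags)) : Prop :=
  Consistent w ∧ ∀ φ : Form Ags, φ ∈ w ∨ neg φ ∈ w

/-- Canonical relation for `□`. -/
def RboxC {Ags : Type} (w v : Set (Form Ags)) : Prop :=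
  ∀ φ : Form Ags, box φ ∈ w → φ ∈ v

/-- Canonical relation for `[α]`. -/
def RactC {Ags : Type} (a : Ags) (w v : Set (Form Ags)) : Prop :=
  ∀ φ : Form Ags, act a φ ∈ w → φ ∈ v

/-- Canonical relation for `K_α`. -/
def RknowC {Ags : Type} (a : Ags) (w v : Set (Form Ags)) : Prop :=
  ∀ φ : Form Ags, know a φ ∈ w → φ ∈ v

/-- `Σ_α^w = {[α]φ : ⊙[α]φ ∈ w}`. -/
def SigmaSet {Ags : Type} (a : Ags) (w : Set (Form Ags)) : Set (Form Ags) :=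
  {ψ | ∃ φ, ψ = act a φ ∧ obj a φ ∈ w}

/-- `Γ_α^w = {K_αφ : ⊙_S[α]φ ∈ w}`. -/
def GammaSet {Ags : Type} (a : Ags) (w : Set (Form Ags)) : Set (Form Ags) :=
  {ψ | ∃ φ, ψ = know a φ ∧ subj a φ ∈ w}

/-- `v ∈ α_k[w]`: the canonical relation of the composite operator `K_α□`. -/
def alphak {Ags : Type} (a : Ags) (w v : Set (Form Ags)) : Prop :=
  ∀ φ : Form Ags, know a (box φ) ∈ w → φ ∈ v


namespace Prov
variable {Ags : Type}

theorem imp_id (φ : Form Ags) : Prov (Form.imp φ φ) :=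
  mp (mp (pl2 φ (Form.imp φ φ) φ) (pl1 φ (Form.imp φ φ))) (pl1 φ φ)

theorem syl {φ ψ χ : Form Ags} (h1 : Prov (Form.imp ψ χ))
    (h2 : Prov (Form.imp φ ψ)) : Prov (Form.imp φ χ) :=
  mp (mp (pl2 φ ψ χ) (mp (pl1 (Form.imp ψ χ) φ) h1)) h2

theorem appl (φ ψ : Form Ags) :
    Prov (Form.imp φ (Form.imp (Form.imp φ ψ) ψ)) :=
  syl (mp (pl2 (Form.imp φ ψ) φ ψ) (imp_id (Form.imp φ ψ)))
    (pl1 φ (Form.imp φ ψ))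

end Prov

/-- If each `◇[αᵢ]φᵢ` (pairwise distinct agents) belongs to a maximal consistent
set, then `{[α₁]φ₁, …, [αₙ]φₙ}` is consistent, i.e. `([α₁]φ₁ ∧ … ∧ [αₙ]φₙ) → ⊥`
is not provable. -/

theorem statement5 {Ags : Type} {n : ℕ} (α : Fin n → Ags)
    (hα : Function.Injective α) (φ : Fin n → Form Ags)
    (w : Set (Form Ags)) (hw : MCS w)
    (hmem : ∀ i, Form.dia (Form.act (α i) (φ i)) ∈ w) :
    ¬ Prov (Form.imp (Form.conjl (List.ofFn fun i => Form.act (α i) (φ i)))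
            Form.bot) := by
  intro h
  -- l : the list of agent-formula pairs
  have hpair : (List.ofFn fun i => (α i, φ i)).Pairwise
      (fun p q : Ags × Form Ags => p.1 ≠ q.1) := by
    rw [List.pairwise_ofFn]
    intro i j hij heq
    exact absurd (hα heq) (Nat.ne_of_lt hij ∘ congrArg Fin.val)
  have hia := Prov.ia (Ags := Ags) (List.ofFn fun i => (α i, φ i)) hpair
  rw [List.map_ofFn, List.map_ofFn] at hia
  -- from h, ⊢ ◇(conj acts) → ⊥
  have hnd : Prov (Form.imp (Form.dia (Form.conjl
      (List.ofFn fun i => Form.act (α i) (φ i)))) Form.bot) :=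
    Prov.mp (Prov.appl _ Form.bot) (Prov.boxNec h)
  have hfin : Prov (Form.imp (Form.conjl
      (List.ofFn fun i => Form.dia (Form.act (α i) (φ i)))) Form.bot) :=
    Prov.syl hnd hia
  exact hw.1 ⟨List.ofFn fun i => Form.dia (Form.act (α i) (φ i)),
    fun ψ hψ => by
      obtain ⟨i, rfl⟩ := List.mem_ofFn.1 hψ
      exact hmem i, hfin⟩
end

section
/- In a logic with S5 operators K_α and □ and the axiom ◇K_α p → K_α ◇ p (uniformity of historical possibility), the canonical frame satisfies: if v ∈ [w₁]_{R_□}, u ∈ [w₂]_{R_□}, and v ≈_α u, then for every v' ∈ [w₁]_{R_□} there exists u' ∈ [w₂]_{R_□} with v' ≈_α u', where R_□ and ≈_α are the canonical relations. -/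
open Form

section Aux

variable {Ags : Type}

/-- Provability from a set of hypotheses. -/
inductive ProvH (Γ : Set (Form Ags)) : Form Ags → Prop
  | ax {φ} (h : φ ∈ Γ) : ProvH Γ φ
  | thm {φ} (h : Prov φ) : ProvH Γ φ
  | mp {φ ψ} (h1 : ProvH Γ (imp φ ψ)) (h2 : ProvH Γ φ) : ProvH Γ ψ

theorem prov_I (φ : Form Ags) : Prov (imp φ φ) :=
  Prov.mp (Prov.mp (Prov.pl2 φ (imp φ φ) φ) (Prov.pl1 φ (imp φ φ))) (Prov.pl1 φ φ)

theorem ProvH.mono {Γ Δ : Set (Form Ags)} {φ} (h : Γ ⊆ Δ) (hp : ProvH Γ φ) :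
    ProvH Δ φ := by
  induction hp with
  | ax h' => exact .ax (h h')
  | thm h' => exact .thm h'
  | mp _ _ ih1 ih2 => exact .mp ih1 ih2

theorem deduction {Γ : Set (Form Ags)} {φ ψ} (h : ProvH (insert φ Γ) ψ) :
    ProvH Γ (imp φ ψ) := by
  induction h with
  | @ax χ h' =>
    rcases Set.mem_insert_iff.1 h' with h' | h'
    · subst h'; exact .thm (prov_I χ)
    · exact .mp (.thm (Prov.pl1 χ φ)) (.ax h')
  | @thm χ h' => exact .mp (.thm (Prov.pl1 χ φ)) (.thm h')
  | @mp χ ρ _ _ ih1 ih2 => exact .mp (.mp (.thm (Prov.pl2 φ χ ρ)) ih1) ih2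

theorem prov_of_provH_empty {φ : Form Ags} (h : ProvH (∅ : Set (Form Ags)) φ) :
    Prov φ := by
  induction h with
  | ax h' => exact absurd h' (Set.notMem_empty _)
  | thm h' => exact h'
  | mp _ _ ih1 ih2 => exact ih1.mp ih2

theorem prov_dni (φ : Form Ags) : Prov (imp φ (neg (neg φ))) := by
  apply prov_of_provH_empty
  apply deduction; apply deduction
  exact .mp (.ax (Set.mem_insert _ _))
    (.ax (Set.mem_insert_of_mem _ (Set.mem_insert _ _)))

theorem prov_dne (φ : Form Ags) : Prov (imp (neg (neg φ)) φ) :=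
  (Prov.pl3 φ (neg (neg φ))).mp (prov_dni (neg φ))

theorem prov_explosion (φ : Form Ags) : Prov (imp bot φ) :=
  (Prov.pl3 φ bot).mp ((Prov.pl1 (neg bot) (neg φ)).mp (prov_I bot))

/-- Proof by contradiction. -/
theorem pbc {Γ : Set (Form Ags)} {φ} (h : ProvH (insert (neg φ) Γ) bot) :
    ProvH Γ φ :=
  .mp (.thm (prov_dne φ)) (deduction h)

theorem provH_explosion {Γ : Set (Form Ags)} (φ) (h : ProvH Γ bot) : ProvH Γ φ :=
  .mp (.thm (prov_explosion φ)) h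

theorem prov_conj_intro (φ ψ : Form Ags) : Prov (imp φ (imp ψ (conj φ ψ))) := by
  apply prov_of_provH_empty
  apply deduction; apply deduction; apply deduction
  -- context: {imp φ (neg ψ), ψ, φ} ⊢ ⊥
  have hf : ProvH (insert (imp φ (neg ψ)) (insert ψ (insert φ (∅ : Set (Form Ags))))) φ :=
    .ax (Set.mem_insert_of_mem _ (Set.mem_insert_of_mem _ (Set.mem_insert _ _)))
  have hp : ProvH (insert (imp φ (neg ψ)) (insert ψ (insert φ (∅ : Set (Form Ags))))) ψ :=
    .ax (Set.mem_insert_of_mem _ (Set.mem_insert _ _))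
  exact .mp (.mp (.ax (Set.mem_insert _ _)) hf) hp

theorem prov_conj_elim₁ (φ ψ : Form Ags) : Prov (imp (conj φ ψ) φ) := by
  apply prov_of_provH_empty
  apply deduction; apply pbc
  -- context: {neg φ, conj φ ψ} ⊢ ⊥
  have h1 : ProvH (insert (neg φ) (insert (conj φ ψ) (∅ : Set (Form Ags)))) (imp φ (neg ψ)) := by
    apply deduction
    apply provH_explosion
    exact .mp (.ax (Set.mem_insert_of_mem _ (Set.mem_insert _ _))) (.ax (Set.mem_insert _ _))
  exact .mp (.ax (Set.mem_insert_of_mem _ (Set.mem_insert _ _))) h1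

theorem prov_conj_elim₂ (φ ψ : Form Ags) : Prov (imp (conj φ ψ) ψ) := by
  apply prov_of_provH_empty
  apply deduction; apply pbc
  -- context: {neg ψ, conj φ ψ} ⊢ ⊥
  have h1 : ProvH (insert (neg ψ) (insert (conj φ ψ) (∅ : Set (Form Ags)))) (imp φ (neg ψ)) :=
    .mp (.thm (Prov.pl1 (neg ψ) φ)) (.ax (Set.mem_insert _ _))
  exact .mp (.ax (Set.mem_insert_of_mem _ (Set.mem_insert _ _))) h1

theorem prov_comp {φ ψ χ : Form Ags} (h1 : Prov (imp φ ψ)) (h2 : Prov (imp ψ χ)) :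
    Prov (imp φ χ) := by
  apply prov_of_provH_empty
  apply deduction
  exact .mp (.thm h2) (.mp (.thm h1) (.ax (Set.mem_insert _ _)))

theorem prov_contrapose {φ ψ : Form Ags} (h : Prov (imp φ ψ)) :
    Prov (imp (neg ψ) (neg φ)) := by
  apply prov_of_provH_empty
  apply deduction; apply deduction
  exact .mp (.ax (Set.mem_insert_of_mem _ (Set.mem_insert _ _)))
    (.mp (.thm h) (.ax (Set.mem_insert _ _)))

theorem prov_conjl_elim {l : List (Form Ags)} {φ} (h : φ ∈ l) :
    Prov (imp (conjl l) φ) := by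
  induction l with
  | nil => exact absurd h List.not_mem_nil
  | cons ψ t ih =>
    rcases List.mem_cons.1 h with h | h
    · subst h; exact prov_conj_elim₁ _ _
    · exact prov_comp (prov_conj_elim₂ ψ (conjl t)) (ih h)

theorem prov_conjl_intro {l : List (Form Ags)} {χ : Form Ags}
    (h : ∀ φ ∈ l, Prov (imp χ φ)) : Prov (imp χ (conjl l)) := by
  induction l with
  | nil => exact (Prov.pl1 (conjl []) χ).mp (prov_I bot)
  | cons ψ t ih =>
    have h1 : Prov (imp χ ψ) := h ψ List.mem_cons_self
    have h2 : Prov (imp χ (conjl t)) := ih fun φ hφ => h φ (List.mem_cons_of_mem _ hφ)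
    apply prov_of_provH_empty
    apply deduction
    exact .mp (.mp (.thm (prov_conj_intro ψ (conjl t)))
      (.mp (.thm h1) (.ax (Set.mem_insert _ _))))
      (.mp (.thm h2) (.ax (Set.mem_insert _ _)))

theorem provH_finite {Γ : Set (Form Ags)} {φ} (h : ProvH Γ φ) :
    ∃ l : List (Form Ags), (∀ ψ ∈ l, ψ ∈ Γ) ∧ Prov (imp (conjl l) φ) := by
  induction h with
  | @ax ψ h' =>
    exact ⟨[ψ], by simpa using h', prov_conjl_elim (List.mem_singleton.2 rfl)⟩
  | @thm ψ h' => exact ⟨[], by simp, (Prov.pl1 ψ (conjl [])).mp h'⟩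
  | @mp ψ χ _ _ ih1 ih2 =>
    obtain ⟨l1, hl1, p1⟩ := ih1
    obtain ⟨l2, hl2, p2⟩ := ih2
    refine ⟨l1 ++ l2, ?_, ?_⟩
    · intro ρ hρ
      rcases List.mem_append.1 hρ with h | h
      · exact hl1 ρ h
      · exact hl2 ρ h
    · have e1 : Prov (imp (conjl (l1 ++ l2)) (conjl l1)) :=
        prov_conjl_intro fun ρ hρ => prov_conjl_elim (List.mem_append_left _ hρ)
      have e2 : Prov (imp (conjl (l1 ++ l2)) (conjl l2)) :=
        prov_conjl_intro fun ρ hρ => prov_conjl_elim (List.mem_append_right _ hρ)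
      apply prov_of_provH_empty
      apply deduction
      have hA : ProvH (insert (conjl (l1 ++ l2)) (∅ : Set (Form Ags))) (conjl (l1 ++ l2)) :=
        .ax (Set.mem_insert _ _)
      exact .mp (.mp (.thm p1) (.mp (.thm e1) hA)) (.mp (.thm p2) (.mp (.thm e2) hA))

theorem provH_conjl {Γ : Set (Form Ags)} {l : List (Form Ags)}
    (h : ∀ φ ∈ l, ProvH Γ φ) : ProvH Γ (conjl l) := by
  induction l with
  | nil => exact .thm (prov_I bot)
  | cons ψ t ih =>
    exact .mp (.mp (.thm (prov_conj_intro ψ (conjl t))) (h ψ List.mem_cons_self))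
      (ih fun φ hφ => h φ (List.mem_cons_of_mem _ hφ))

theorem consistent_iff {Γ : Set (Form Ags)} : Consistent Γ ↔ ¬ ProvH Γ bot := by
  constructor
  · intro hc hp
    obtain ⟨l, hl, p⟩ := provH_finite hp
    exact hc ⟨l, hl, p⟩
  · intro hp ⟨l, hl, p⟩
    exact hp (.mp (.thm p) (provH_conjl fun φ hφ => .ax (hl φ hφ)))

theorem mcs_thm {w : Set (Form Ags)} (hw : MCS w) {φ} (h : Prov φ) : φ ∈ w := by
  rcases hw.2 φ with h' | h'
  · exact h'
  · exact absurd (ProvH.mp (.ax h') (.thm h)) (consistent_iff.1 hw.1)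

theorem mcs_mp {w : Set (Form Ags)} (hw : MCS w) {φ ψ}
    (h1 : imp φ ψ ∈ w) (h2 : φ ∈ w) : ψ ∈ w := by
  rcases hw.2 ψ with h' | h'
  · exact h'
  · exact absurd (ProvH.mp (.ax h') (ProvH.mp (.ax h1) (.ax h2)))
      (consistent_iff.1 hw.1)

theorem mcs_not_both {w : Set (Form Ags)} (hw : MCS w) {φ}
    (h1 : φ ∈ w) (h2 : neg φ ∈ w) : False :=
  (consistent_iff.1 hw.1) (ProvH.mp (.ax h2) (.ax h1))

/-- Lindenbaum's lemma. -/
theorem lindenbaum {Γ : Set (Form Ags)} (h : Consistent Γ) :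
    ∃ w : Set (Form Ags), MCS w ∧ Γ ⊆ w := by
  have H : ∀ c ⊆ {Δ : Set (Form Ags) | Consistent Δ}, IsChain (· ⊆ ·) c →
      c.Nonempty → ∃ ub ∈ {Δ : Set (Form Ags) | Consistent Δ}, ∀ s ∈ c, s ⊆ ub := by
    intro c hc hchain hne
    refine ⟨⋃₀ c, ?_, fun s hs => Set.subset_sUnion_of_mem hs⟩
    rw [Set.mem_setOf_eq, consistent_iff]
    intro hp
    obtain ⟨l, hl, p⟩ := provH_finite hp
    have key : ∃ t ∈ c, ∀ φ ∈ l, φ ∈ t := by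
      clear p
      induction l with
      | nil => exact ⟨hne.choose, hne.choose_spec, by simp⟩
      | cons ψ rest ih =>
        obtain ⟨t, htc, ht⟩ := ih fun φ hφ => hl φ (List.mem_cons_of_mem _ hφ)
        obtain ⟨s, hsc, hψs⟩ := hl ψ List.mem_cons_self
        rcases hchain.total htc hsc with hts | hst
        · exact ⟨s, hsc, fun φ hφ => by
            rcases List.mem_cons.1 hφ with h | h
            · exact h ▸ hψs
            · exact hts (ht φ h)⟩
        · exact ⟨t, htc, fun φ hφ => by
            rcases List.mem_cons.1 hφ with h | h
            · exact h ▸ hst hψs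
            · exact ht φ h⟩
    obtain ⟨t, htc, ht⟩ := key
    exact (consistent_iff.1 (hc htc)) (.mp (.thm p) (provH_conjl fun φ hφ => .ax (ht φ hφ)))
  obtain ⟨m, hsub, hmax⟩ :=
    zorn_subset_nonempty {Δ : Set (Form Ags) | Consistent Δ} H Γ h
  have hm : Consistent m := hmax.1
  refine ⟨m, ⟨hm, ?_⟩, hsub⟩
  intro φ
  by_contra hcon
  push_neg at hcon
  obtain ⟨h1, h2⟩ := hcon
  have k1 : ¬ Consistent (insert φ m) := by
    intro hc
    exact h1 (hmax.2 hc (Set.subset_insert _ _) (Set.mem_insert _ _))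
  have k2 : ¬ Consistent (insert (neg φ) m) := by
    intro hc
    exact h2 (hmax.2 hc (Set.subset_insert _ _) (Set.mem_insert _ _))
  rw [consistent_iff, not_not] at k1 k2
  exact (consistent_iff.1 hm) (ProvH.mp (deduction k2) (deduction k1))

/-- Modal monotonicity lemmas. -/
theorem box_mono {φ ψ : Form Ags} (h : Prov (imp φ ψ)) :
    Prov (imp (box φ) (box ψ)) :=
  (Prov.boxK φ ψ).mp (Prov.boxNec h)

theorem box_mono2 {φ ψ χ : Form Ags} (h : Prov (imp φ (imp ψ χ))) :
    Prov (imp (box φ) (imp (box ψ) (box χ))) :=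
  prov_comp (box_mono h) (Prov.boxK ψ χ)

theorem know_mono {a : Ags} {φ ψ : Form Ags} (h : Prov (imp φ ψ)) :
    Prov (imp (know a φ) (know a ψ)) :=
  (Prov.knowK a φ ψ).mp (Prov.knowNec a h)

theorem know_mono2 {a : Ags} {φ ψ χ : Form Ags} (h : Prov (imp φ (imp ψ χ))) :
    Prov (imp (know a φ) (imp (know a ψ) (know a χ))) :=
  prov_comp (know_mono h) (Prov.knowK a ψ χ)

theorem dia_mono {φ ψ : Form Ags} (h : Prov (imp φ ψ)) :
    Prov (imp (dia φ) (dia ψ)) :=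
  prov_contrapose (box_mono (prov_contrapose h))

theorem prov_T_dia (φ : Form Ags) : Prov (imp φ (dia φ)) :=
  prov_comp (prov_dni φ) (prov_contrapose (Prov.boxT (neg φ)))

theorem prov_B (φ : Form Ags) : Prov (imp φ (box (dia φ))) :=
  prov_comp (prov_T_dia φ) (Prov.box5 φ)

theorem mirror_box {w v : Set (Form Ags)} (hw : MCS w) (hv : MCS v)
    (hR : RboxC w v) {φ} (h : φ ∈ v) : dia φ ∈ w := by
  rcases hw.2 (dia φ) with h' | h'
  · exact h'
  · have hb : box (neg φ) ∈ w := mcs_mp hw (mcs_thm hw (prov_dne (box (neg φ)))) h'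
    exact absurd (hR _ hb) fun hn => mcs_not_both hv h hn

theorem rbox_symm {w v : Set (Form Ags)} (hw : MCS w) (hv : MCS v)
    (hR : RboxC w v) : RboxC v w := by
  intro φ hφ
  rcases hw.2 φ with h' | h'
  · exact h'
  · have h1 : box (dia (neg φ)) ∈ w := mcs_mp hw (mcs_thm hw (prov_B (neg φ))) h'
    have h2 : dia (neg φ) ∈ v := hR _ h1
    have h3 : box (neg (neg φ)) ∈ v := mcs_mp hv (mcs_thm hv (box_mono (prov_dni φ))) hφ
    exact absurd h3 fun hn => mcs_not_both hv hn h2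

theorem rbox_trans {w v z : Set (Form Ags)} (hw : MCS w)
    (h1 : RboxC w v) (h2 : RboxC v z) : RboxC w z := by
  intro φ hφ
  exact h2 _ (h1 _ (mcs_mp hw (mcs_thm hw (Prov.box4 φ)) hφ))

theorem mcs_box_conjl {w : Set (Form Ags)} (hw : MCS w) {l : List (Form Ags)}
    (h : ∀ φ ∈ l, box φ ∈ w) : box (conjl l) ∈ w := by
  induction l with
  | nil => exact mcs_thm hw (Prov.boxNec (prov_I bot))
  | cons ψ t ih =>
    have h1 : box ψ ∈ w := h ψ List.mem_cons_self
    have h2 : box (conjl t) ∈ w := ih fun φ hφ => h φ (List.mem_cons_of_mem _ hφ)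
    exact mcs_mp hw (mcs_mp hw (mcs_thm hw (box_mono2 (prov_conj_intro ψ (conjl t)))) h1) h2

theorem mcs_know_conjl {w : Set (Form Ags)} (hw : MCS w) {a : Ags}
    {l : List (Form Ags)} (h : ∀ φ ∈ l, know a φ ∈ w) : know a (conjl l) ∈ w := by
  induction l with
  | nil => exact mcs_thm hw (Prov.knowNec a (prov_I bot))
  | cons ψ t ih =>
    have h1 : know a ψ ∈ w := h ψ List.mem_cons_self
    have h2 : know a (conjl t) ∈ w := ih fun φ hφ => h φ (List.mem_cons_of_mem _ hφ)
    exact mcs_mp hw (mcs_mp hw (mcs_thm hw (know_mono2 (prov_conj_intro ψ (conjl t)))) h1) h2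

end Aux

/-- Canonical uniformity of historical possibility: if `v ∈ [w₁]_{R_□}`,
`u ∈ [w₂]_{R_□}` and `v ≈_α u`, then every `v' ∈ [w₁]_{R_□}` has some
`u' ∈ [w₂]_{R_□}` with `v' ≈_α u'`. -/
theorem statement8 {Ags : Type} (a : Ags) (w₁ w₂ v u : Set (Form Ags))
    (hw₁ : MCS w₁) (hw₂ : MCS w₂) (hv : MCS v) (hu : MCS u)
    (hv₁ : RboxC w₁ v) (hu₂ : RboxC w₂ u) (hvu : RknowC a v u)
    (v' : Set (Form Ags)) (hv' : MCS v') (hv'₁ : RboxC w₁ v') :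
    ∃ u', MCS u' ∧ RboxC w₂ u' ∧ RknowC a v' u' := by
  classical
  set Δ : Set (Form Ags) :=
    {ψ | box ψ ∈ w₂} ∪ {ψ | know a ψ ∈ v'} with hΔ
  have hcons : Consistent Δ := by
    rintro ⟨l, hl, p⟩
    set lb : List (Form Ags) := l.filter (fun φ => decide (box φ ∈ w₂)) with hlb
    set lk : List (Form Ags) := l.filter (fun φ => ¬ decide (box φ ∈ w₂)) with hlk
    have hmem_lb : ∀ φ ∈ lb, box φ ∈ w₂ := by
      intro φ hφ
      have := (List.mem_filter.1 hφ).2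
      exact of_decide_eq_true this
    have hmem_lk : ∀ φ ∈ lk, know a φ ∈ v' := by
      intro φ hφ
      obtain ⟨hφl, hd⟩ := List.mem_filter.1 hφ
      have hnb : ¬ box φ ∈ w₂ := by
        intro hb
        simp [hb] at hd
      rcases hl φ hφl with h | h
      · exact absurd h hnb
      · exact h
    set Bc : Form Ags := conjl lb with hBc
    set C : Form Ags := conjl lk with hC
    -- Prov (imp (conj Bc C) bot)
    have split : ∀ φ ∈ l, Prov (imp (conj Bc C) φ) := by
      intro φ hφ
      by_cases hb : box φ ∈ w₂
      · exact prov_comp (prov_conj_elim₁ Bc C)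
          (prov_conjl_elim (List.mem_filter.2 ⟨hφ, by simp [hb]⟩))
      · exact prov_comp (prov_conj_elim₂ Bc C)
          (prov_conjl_elim (List.mem_filter.2 ⟨hφ, by simp [hb]⟩))
    have pConj : Prov (imp (conj Bc C) bot) :=
      prov_comp (prov_conjl_intro split) p
    -- Prov (imp C (neg Bc))
    have pCnB : Prov (imp C (neg Bc)) := by
      apply prov_of_provH_empty
      apply deduction; apply deduction
      have hBax : ProvH (insert Bc (insert C (∅ : Set (Form Ags)))) Bc :=
        .ax (Set.mem_insert _ _)
      have hCax : ProvH (insert Bc (insert C (∅ : Set (Form Ags)))) C :=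
        .ax (Set.mem_insert_of_mem _ (Set.mem_insert _ _))
      exact .mp (.thm pConj)
        (.mp (.mp (.thm (prov_conj_intro Bc C)) hBax) hCax)
    -- know a C ∈ v'
    have hKC : know a C ∈ v' := mcs_know_conjl hv' hmem_lk
    -- v R_□ v'
    have hvv' : RboxC v v' := rbox_trans hv (rbox_symm hw₁ hv hv₁) hv'₁
    have hdkc : dia (know a C) ∈ v := mirror_box hv hv' hvv' hKC
    have hkdc : know a (dia C) ∈ v :=
      mcs_mp hv (mcs_thm hv (Prov.unifH a C)) hdkc
    have hdcu : dia C ∈ u := hvu _ hkdc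
    -- box Bc ∈ u
    have hbBu : box Bc ∈ u := by
      apply mcs_box_conjl hu
      intro φ hφ
      exact hu₂ _ (mcs_mp hw₂ (mcs_thm hw₂ (Prov.box4 φ)) (hmem_lb φ hφ))
    have hdnB : dia (neg Bc) ∈ u :=
      mcs_mp hu (mcs_thm hu (dia_mono pCnB)) hdcu
    have hbnn : box (neg (neg Bc)) ∈ u :=
      mcs_mp hu (mcs_thm hu (box_mono (prov_dni Bc))) hbBu
    exact mcs_not_both hu hbnn hdnB
  obtain ⟨u', hu', hsub⟩ := lindenbaum hcons
  refine ⟨u', hu', ?_, ?_⟩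
  · intro φ hφ
    exact hsub (Set.mem_union_left _ hφ)
  · intro φ hφ
    exact hsub (Set.mem_union_right _ hφ)
end

section
/- In a logic containing S5 axioms for K_α and [α] and the axiom schema K_α p → [α]p, the canonical relations satisfy the own-action condition: if w ≈_α u and w R_α v, then v ≈_α u. -/
open Form

/-! An `[α]`-successor is a `K_α`-successor because `K_α p → [α] p`, and negative introspection
transfers `K_α`-formulas back along `≈_α`. So `K_α φ ∈ v` gives `K_α φ ∈ w`, hence `φ ∈ u`. -/

namespace Prov

variable {Ags : Type} {φ ψ χ : Form Ags}

theorem imp_self (φ : Form Ags) : Prov (imp φ φ) :=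
  mp (mp (pl2 φ (imp φ φ) φ) (pl1 φ (imp φ φ))) (pl1 φ φ)

theorem imp_trans (h₁ : Prov (imp φ ψ)) (h₂ : Prov (imp ψ χ)) : Prov (imp φ χ) :=
  mp (mp (pl2 φ ψ χ) (mp (pl1 (imp ψ χ) φ) h₂)) h₁

theorem imp_swap (h : Prov (imp φ (imp ψ χ))) : Prov (imp ψ (imp φ χ)) :=
  imp_trans (pl1 ψ φ) (mp (pl2 φ ψ χ) h)

theorem not_not_intro (φ : Form Ags) : Prov (imp φ (neg (neg φ))) :=
  imp_swap (imp_self (neg φ))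

theorem bot_elim (φ : Form Ags) : Prov (imp bot φ) :=
  mp (pl3 φ bot) (mp (pl1 (imp bot bot) (neg φ)) (imp_self bot))

theorem conj_left (φ ψ : Form Ags) : Prov (imp (conj φ ψ) φ) := by
  have hneg : Prov (imp (neg φ) (imp φ (neg ψ))) :=
    mp (pl2 φ bot (neg ψ)) (mp (pl1 (imp bot (neg ψ)) φ) (bot_elim (neg ψ)))
  exact mp (pl3 φ _) (imp_trans hneg (not_not_intro _))

theorem conj_right (φ ψ : Form Ags) : Prov (imp (conj φ ψ) ψ) :=
  mp (pl3 ψ _) (imp_trans (pl1 (neg ψ) φ) (not_not_intro _))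

theorem conjl_pair_neg_imp_bot (h : Prov (imp φ ψ)) : Prov (imp (conjl [φ, neg ψ]) bot) := by
  have hφ : Prov (imp (conjl [φ, neg ψ]) φ) := conj_left φ _
  have hnψ : Prov (imp (conjl [φ, neg ψ]) (neg ψ)) :=
    imp_trans (conj_right φ _) (conj_left (neg ψ) _)
  exact mp (mp (pl2 _ ψ bot) hnψ) (imp_trans hφ h)

end Prov

section Canonical

variable {Ags : Type} {a : Ags} {w v : Set (Form Ags)} {φ ψ : Form Ags}

theorem Consistent.neg_not_mem_of_prov_imp (hw : Consistent w) (h : Prov (imp φ ψ))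
    (hφ : φ ∈ w) : neg ψ ∉ w := fun hnψ =>
  hw ⟨[φ, neg ψ], by simp [hφ, hnψ], Prov.conjl_pair_neg_imp_bot h⟩

theorem MCS.mem_of_prov_imp (hw : MCS w) (h : Prov (imp φ ψ)) (hφ : φ ∈ w) : ψ ∈ w :=
  (hw.2 ψ).resolve_right (hw.1.neg_not_mem_of_prov_imp h hφ)

theorem MCS.neg_not_mem (hw : MCS w) (hφ : φ ∈ w) : neg φ ∉ w :=
  hw.1.neg_not_mem_of_prov_imp (Prov.imp_self φ) hφ

theorem RknowC_of_RactC (hw : MCS w) (h : RactC a w v) : RknowC a w v := fun φ hφ =>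
  h φ (hw.mem_of_prov_imp (Prov.oacAx a φ) hφ)

theorem RknowC.know_mem_of_know_mem (h : RknowC a w v) (hw : MCS w) (hv : MCS v)
    (hφ : know a φ ∈ v) : know a φ ∈ w := by
  refine (hw.2 _).resolve_right fun hnφ => hv.neg_not_mem hφ (h _ ?_)
  exact hw.mem_of_prov_imp (Prov.know5 a φ) hnφ

end Canonical

theorem statement9_general {Ags : Type} (a : Ags) (w u v : Set (Form Ags))
    (hw : MCS w) (hv : MCS v)
    (h1 : RknowC a w u) (h2 : RactC a w v) : RknowC a v u := fun φ hφ =>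
  h1 φ ((RknowC_of_RactC hw h2).know_mem_of_know_mem hw hv hφ)

/-- Canonical own-action condition: if `w ≈_α u` and `w R_α v`, then `v ≈_α u`. -/
theorem statement9 {Ags : Type} (a : Ags) (w u v : Set (Form Ags))
    (hw : MCS w) (hu : MCS u) (hv : MCS v)
    (h1 : RknowC a w u) (h2 : RactC a w v) : RknowC a v u :=
  statement9_general a w u v hw hv h1 h2
end

section
/- In the logic Λ, the formulas ⊙[α]φ and ⊙[β]¬φ are jointly inconsistent for any agents α, β: ⊢ ⊙[α]φ ∧ ⊙[β]¬φ → ⊥. Consequently ⊢ ⊙[α]φ → ¬⊙[β]¬φ (consistency of ought-to-do). -/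
open Form

section Aux
variable {Ags : Type}

theorem Prov.idem (φ : Form Ags) : Prov (Form.imp φ φ) :=
  Prov.mp (Prov.mp (Prov.pl2 φ (Form.imp φ φ) φ) (Prov.pl1 φ (Form.imp φ φ)))
    (Prov.pl1 φ φ)

/-- Provability from a list of hypotheses. -/
inductive ProvC : List (Form Ags) → Form Ags → Prop
  | ax {Γ : List (Form Ags)} {φ : Form Ags} : Prov φ → ProvC Γ φ
  | hyp {Γ : List (Form Ags)} {φ : Form Ags} : φ ∈ Γ → ProvC Γ φ
  | mp {Γ : List (Form Ags)} {φ ψ : Form Ags} :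
      ProvC Γ (Form.imp φ ψ) → ProvC Γ φ → ProvC Γ ψ

theorem ProvC.ded_aux {Δ : List (Form Ags)} {ψ : Form Ags} (h : ProvC Δ ψ) :
    ∀ (Γ : List (Form Ags)) (φ : Form Ags), Δ = φ :: Γ → ProvC Γ (Form.imp φ ψ) := by
  induction h with
  | ax h =>
      intro Γ φ _
      exact .mp (.ax (Prov.pl1 _ φ)) (.ax h)
  | hyp h =>
      intro Γ φ hΔ
      subst hΔ
      rcases List.mem_cons.1 h with h | h
      · subst h; exact .ax (Prov.idem _)
      · exact .mp (.ax (Prov.pl1 _ φ)) (.hyp h)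
  | mp _ _ ih1 ih2 =>
      intro Γ φ hΔ
      exact .mp (.mp (.ax (Prov.pl2 φ _ _)) (ih1 Γ φ hΔ)) (ih2 Γ φ hΔ)

theorem ProvC.ded {Γ : List (Form Ags)} {φ ψ : Form Ags}
    (h : ProvC (φ :: Γ) ψ) : ProvC Γ (Form.imp φ ψ) :=
  h.ded_aux Γ φ rfl

theorem ProvC.toProv {φ : Form Ags} (h : ProvC [] φ) : Prov φ := by
  induction h with
  | ax h => exact h
  | hyp h => exact absurd h List.not_mem_nil
  | mp _ _ ih1 ih2 => exact Prov.mp ih1 ih2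

theorem ProvC.weak {Γ : List (Form Ags)} {φ ψ : Form Ags} (h : ProvC Γ ψ) :
    ProvC (φ :: Γ) ψ := by
  induction h with
  | ax h => exact .ax h
  | hyp h => exact .hyp (List.mem_cons_of_mem _ h)
  | mp _ _ ih1 ih2 => exact .mp ih1 ih2

theorem ProvC.hyp0 {Γ : List (Form Ags)} {φ : Form Ags} : ProvC (φ :: Γ) φ :=
  .hyp List.mem_cons_self

theorem ProvC.hyp1 {Γ : List (Form Ags)} {φ ψ : Form Ags} :
    ProvC (ψ :: φ :: Γ) φ :=
  .hyp (List.mem_cons_of_mem _ List.mem_cons_self)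

theorem Prov.dni (φ : Form Ags) : Prov (Form.imp φ (Form.neg (Form.neg φ))) :=
  ProvC.toProv <| .ded <| .ded <| .mp .hyp0 .hyp1

theorem Prov.dne (φ : Form Ags) : Prov (Form.imp (Form.neg (Form.neg φ)) φ) :=
  Prov.mp (Prov.pl3 φ (Form.neg (Form.neg φ))) (Prov.dni (Form.neg φ))

theorem ProvC.efq {Γ : List (Form Ags)} {φ : Form Ags}
    (h : ProvC Γ Form.bot) : ProvC Γ φ :=
  .mp (.ax (Prov.dne φ)) (.mp (.ax (Prov.pl1 Form.bot (Form.neg φ))) h)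

/-- reductio: from `¬φ ⊢ ⊥` conclude `⊢ φ`. -/
theorem ProvC.raa {Γ : List (Form Ags)} {φ : Form Ags}
    (h : ProvC (Form.neg φ :: Γ) Form.bot) : ProvC Γ φ :=
  .mp (.ax (Prov.dne φ)) h.ded

theorem ProvC.andI {Γ : List (Form Ags)} {φ ψ : Form Ags}
    (h1 : ProvC Γ φ) (h2 : ProvC Γ ψ) : ProvC Γ (Form.conj φ ψ) :=
  ProvC.ded (Γ := Γ) (φ := Form.imp φ (Form.neg ψ))
    (.mp (.mp .hyp0 h1.weak) h2.weak)

theorem ProvC.andE1 {Γ : List (Form Ags)} {φ ψ : Form Ags}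
    (h : ProvC Γ (Form.conj φ ψ)) : ProvC Γ φ := by
  apply ProvC.raa
  refine .mp h.weak (.ded ?_)
  exact ProvC.efq (.mp .hyp1 .hyp0)

theorem ProvC.andE2 {Γ : List (Form Ags)} {φ ψ : Form Ags}
    (h : ProvC Γ (Form.conj φ ψ)) : ProvC Γ ψ := by
  apply ProvC.raa
  refine .mp h.weak (.ded ?_)
  exact .hyp1

end Aux

/-- Consistency of ought-to-do: `⊢ ⊙[α]φ ∧ ⊙[β]¬φ → ⊥`, and consequently
`⊢ ⊙[α]φ → ¬⊙[β]¬φ`. -/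
theorem statement10 {Ags : Type} (a b : Ags) (φ : Form Ags) :
    Prov (Form.imp (Form.conj (Form.obj a φ) (Form.obj b (Form.neg φ)))
          Form.bot) ∧
    Prov (Form.imp (Form.obj a φ) (Form.neg (Form.obj b (Form.neg φ)))) := by
  have main : Prov (Form.imp (Form.conj (Form.obj a φ) (Form.obj b (Form.neg φ)))
      Form.bot) := by
    apply ProvC.toProv
    apply ProvC.ded
    have h1 : ProvC [Form.conj (Form.obj a φ) (Form.obj b (Form.neg φ))]
        (Form.obj a φ) := ProvC.andE1 .hyp0
    have h2 : ProvC [Form.conj (Form.obj a φ) (Form.obj b (Form.neg φ))]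
        (Form.obj b (Form.neg φ)) := ProvC.andE2 .hyp0
    by_cases hab : a = b
    · -- same agent: ⊙a φ ∧ ⊙a ¬φ → ⊙a ⊥ → ◇[a]⊥, but ⊢ ¬[a]⊥.
      subst hab
      have hbot : ProvC [Form.conj (Form.obj a φ) (Form.obj a (Form.neg φ))]
          (Form.obj a Form.bot) :=
        .mp (.mp (.ax (Prov.a1 a φ Form.bot)) h2) h1
      have hdia := ProvC.mp (.ax (Prov.oic a Form.bot)) hbot
      exact .mp hdia (.ax (Prov.boxNec (Prov.actT a Form.bot)))
    · -- different agents: use independence of agency.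
      have d1 := ProvC.mp (.ax (Prov.oic a φ)) h1
      have d2 := ProvC.mp (.ax (Prov.oic b (Form.neg φ))) h2
      have hpair : ([(a, φ), (b, Form.neg φ)] : List (Ags × Form Ags)).Pairwise
          (fun p q => p.1 ≠ q.1) := by
        simp [List.pairwise_cons, hab]
      have hia := Prov.ia [(a, φ), (b, Form.neg φ)] hpair
      simp only [List.map, Form.conjl] at hia
      have hP := ProvC.andI d1 (ProvC.andI d2 (.ax (Prov.idem Form.bot)))
      have hc := ProvC.mp (.ax hia) hP
      have hq : Prov (Form.neg (Form.conj (Form.act a φ)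
          (Form.conj (Form.act b (Form.neg φ)) (Form.neg Form.bot)))) := by
        apply ProvC.toProv
        apply ProvC.ded
        have x : ProvC [Form.conj (Form.act a φ)
            (Form.conj (Form.act b (Form.neg φ)) (Form.neg Form.bot))] φ :=
          .mp (.ax (Prov.actT a φ)) (ProvC.andE1 .hyp0)
        have y : ProvC [Form.conj (Form.act a φ)
            (Form.conj (Form.act b (Form.neg φ)) (Form.neg Form.bot))]
            (Form.neg φ) :=
          .mp (.ax (Prov.actT b (Form.neg φ))) (ProvC.andE1 (ProvC.andE2 .hyp0))
        exact .mp y x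
      exact .mp hc (.ax (Prov.boxNec hq))
  refine ⟨main, ?_⟩
  apply ProvC.toProv
  apply ProvC.ded
  apply ProvC.ded
  exact .mp (.ax main) (ProvC.andI .hyp1 .hyp0)
end

section
/- In the canonical model of Λ, for every maximal consistent set w the set Σ^w = ⋃_α {[α]φ : ⊙[α]φ ∈ w} is Λ-consistent, and moreover Σ^w ∪ {□ψ : □ψ ∈ w} is Λ-consistent; hence there exists a maximal consistent set u with w R_□ u and Value_O(u) = 1 (i.e., Σ^u ⊆ u). -/
open Form

/-- `Σ^w = ⋃_α Σ_α^w`. -/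
def SigmaAll {Ags : Type} (w : Set (Form Ags)) : Set (Form Ags) :=
  ⋃ a : Ags, SigmaSet a w

namespace StitAux

variable {Ags : Type}

/-- Derivability from a set of hypotheses. -/
inductive Hd (Γ : Set (Form Ags)) : Form Ags → Prop
  | ax {φ} : φ ∈ Γ → Hd Γ φ
  | thm {φ} : Prov φ → Hd Γ φ
  | mp {φ ψ} : Hd Γ (imp φ ψ) → Hd Γ φ → Hd Γ ψ

theorem prov_id (φ : Form Ags) : Prov (imp φ φ) :=
  Prov.mp (Prov.mp (Prov.pl2 φ (imp φ φ) φ) (Prov.pl1 φ (imp φ φ))) (Prov.pl1 φ φ)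

theorem Hd.mono {Γ Δ : Set (Form Ags)} {φ} (h : Γ ⊆ Δ) (hd : Hd Γ φ) : Hd Δ φ := by
  induction hd with
  | ax h' => exact Hd.ax (h h')
  | thm h' => exact Hd.thm h'
  | mp _ _ ih1 ih2 => exact Hd.mp ih1 ih2

theorem deduction {Γ : Set (Form Ags)} {φ ψ} (h : Hd (insert φ Γ) ψ) : Hd Γ (imp φ ψ) := by
  induction h with
  | @ax χ h' =>
    rcases h' with h' | h'
    · subst h'; exact Hd.thm (prov_id _)
    · exact Hd.mp (Hd.thm (Prov.pl1 χ φ)) (Hd.ax h')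
  | @thm χ h' => exact Hd.mp (Hd.thm (Prov.pl1 χ φ)) (Hd.thm h')
  | @mp χ ρ _ _ ih1 ih2 =>
    exact Hd.mp (Hd.mp (Hd.thm (Prov.pl2 φ χ ρ)) ih1) ih2

theorem Hd.cut {Γ Δ : Set (Form Ags)} {φ} (h : Hd Γ φ) (hs : ∀ ψ ∈ Γ, Hd Δ ψ) : Hd Δ φ := by
  induction h with
  | ax h' => exact hs _ h'
  | thm h' => exact Hd.thm h'
  | mp _ _ ih1 ih2 => exact Hd.mp ih1 ih2

theorem hd_empty {φ : Form Ags} (h : Hd (∅ : Set (Form Ags)) φ) : Prov φ := by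
  induction h with
  | ax h' => exact absurd h' (Set.notMem_empty _)
  | thm h' => exact h'
  | mp _ _ ih1 ih2 => exact Prov.mp ih1 ih2

theorem prov_neg_imp (φ ψ : Form Ags) : Prov (imp (neg φ) (imp φ ψ)) := by
  apply hd_empty; apply deduction; apply deduction
  have hnφ : Hd (insert φ (insert (neg φ) (∅ : Set (Form Ags)))) (neg φ) :=
    Hd.ax (Set.mem_insert_of_mem _ (Set.mem_insert _ _))
  have hφ : Hd (insert φ (insert (neg φ) (∅ : Set (Form Ags)))) φ :=
    Hd.ax (Set.mem_insert _ _)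
  exact Hd.mp (Hd.mp (Hd.thm (Prov.pl3 ψ φ))
    (Hd.mp (Hd.thm (Prov.pl1 (neg φ) (neg ψ))) hnφ)) hφ

theorem prov_conj_intro (φ ψ : Form Ags) : Prov (imp φ (imp ψ (conj φ ψ))) := by
  apply hd_empty; apply deduction; apply deduction; apply deduction
  have h1 : Hd (insert (imp φ (neg ψ)) (insert ψ (insert φ (∅ : Set (Form Ags)))))
      (imp φ (neg ψ)) := Hd.ax (Set.mem_insert _ _)
  have h2 : Hd (insert (imp φ (neg ψ)) (insert ψ (insert φ (∅ : Set (Form Ags))))) ψ :=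
    Hd.ax (Set.mem_insert_of_mem _ (Set.mem_insert _ _))
  have h3 : Hd (insert (imp φ (neg ψ)) (insert ψ (insert φ (∅ : Set (Form Ags))))) φ :=
    Hd.ax (Set.mem_insert_of_mem _ (Set.mem_insert_of_mem _ (Set.mem_insert _ _)))
  exact Hd.mp (Hd.mp h1 h3) h2

theorem prov_conj_left (φ ψ : Form Ags) : Prov (imp (conj φ ψ) φ) := by
  have h : Prov (imp (neg φ) (neg (conj φ ψ))) := by
    apply hd_empty; apply deduction; apply deduction
    have h1 : Hd (insert (imp φ (neg ψ)).neg (insert (neg φ) (∅ : Set (Form Ags))))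
        (neg (imp φ (neg ψ))) := Hd.ax (Set.mem_insert _ _)
    have h2 : Hd (insert (imp φ (neg ψ)).neg (insert (neg φ) (∅ : Set (Form Ags))))
        (neg φ) := Hd.ax (Set.mem_insert_of_mem _ (Set.mem_insert _ _))
    exact Hd.mp h1 (Hd.mp (Hd.thm (prov_neg_imp φ (neg ψ))) h2)
  exact Prov.mp (Prov.pl3 φ (conj φ ψ)) h

theorem prov_conj_right (φ ψ : Form Ags) : Prov (imp (conj φ ψ) ψ) := by
  have h : Prov (imp (neg ψ) (neg (conj φ ψ))) := by
    apply hd_empty; apply deduction; apply deduction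
    have h1 : Hd (insert (imp φ (neg ψ)).neg (insert (neg ψ) (∅ : Set (Form Ags))))
        (neg (imp φ (neg ψ))) := Hd.ax (Set.mem_insert _ _)
    have h2 : Hd (insert (imp φ (neg ψ)).neg (insert (neg ψ) (∅ : Set (Form Ags))))
        (neg ψ) := Hd.ax (Set.mem_insert_of_mem _ (Set.mem_insert _ _))
    exact Hd.mp h1 (Hd.mp (Hd.thm (Prov.pl1 (neg ψ) φ)) h2)
  exact Prov.mp (Prov.pl3 ψ (conj φ ψ)) h

theorem prov_imp_trans {φ ψ χ : Form Ags} (h1 : Prov (imp φ ψ)) (h2 : Prov (imp ψ χ)) :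
    Prov (imp φ χ) := by
  apply hd_empty; apply deduction
  exact Hd.mp (Hd.thm h2) (Hd.mp (Hd.thm h1) (Hd.ax (Set.mem_insert _ _)))

theorem mem_conjl {l : List (Form Ags)} {φ} (h : φ ∈ l) : Prov (imp (conjl l) φ) := by
  induction l with
  | nil => cases h
  | cons ψ t ih =>
    rcases List.mem_cons.1 h with rfl | h
    · exact prov_conj_left φ (conjl t)
    · exact prov_imp_trans (prov_conj_right ψ (conjl t)) (ih h)

theorem conjl_intro {Γ : Set (Form Ags)} {l : List (Form Ags)} (h : ∀ φ ∈ l, Hd Γ φ) :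
    Hd Γ (conjl l) := by
  induction l with
  | nil => exact Hd.thm (prov_id Form.bot)
  | cons ψ t ih =>
    exact Hd.mp (Hd.mp (Hd.thm (prov_conj_intro ψ (conjl t))) (h ψ (by simp)))
      (ih fun φ hφ => h φ (by simp [hφ]))

theorem hd_compact {Γ : Set (Form Ags)} {φ} (h : Hd Γ φ) :
    ∃ l : List (Form Ags), (∀ ψ ∈ l, ψ ∈ Γ) ∧ Prov (imp (conjl l) φ) := by
  induction h with
  | @ax χ h' =>
    refine ⟨[χ], ?_, prov_conj_left _ _⟩
    intro ψ hψ; rcases hψ with _ | h; exacts [h', by cases (by assumption : ψ ∈ [])]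
  | @thm χ h' => exact ⟨[], by simp, Prov.mp (Prov.pl1 χ (neg Form.bot)) h'⟩
  | @mp χ ρ _ _ ih1 ih2 =>
    obtain ⟨l1, hl1, hp1⟩ := ih1
    obtain ⟨l2, hl2, hp2⟩ := ih2
    refine ⟨l1 ++ l2, ?_, ?_⟩
    · intro ψ hψ
      rcases List.mem_append.1 hψ with h | h
      exacts [hl1 ψ h, hl2 ψ h]
    apply hd_empty; apply deduction
    have hc : ∀ ψ ∈ l1 ++ l2, Hd (insert (conjl (l1 ++ l2)) (∅ : Set (Form Ags))) ψ :=
      fun ψ hψ => Hd.mp (Hd.thm (mem_conjl hψ)) (Hd.ax (Set.mem_insert _ _))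
    have h1 : Hd (insert (conjl (l1 ++ l2)) (∅ : Set (Form Ags))) (conjl l1) :=
      conjl_intro fun ψ hψ => hc ψ (List.mem_append.2 (Or.inl hψ))
    have h2 : Hd (insert (conjl (l1 ++ l2)) (∅ : Set (Form Ags))) (conjl l2) :=
      conjl_intro fun ψ hψ => hc ψ (List.mem_append.2 (Or.inr hψ))
    exact Hd.mp (Hd.mp (Hd.thm hp1) h1) (Hd.mp (Hd.thm hp2) h2)

theorem list_deduction {l : List (Form Ags)} {ψ} (h : Hd {x | x ∈ l} ψ) :
    Prov (imp (conjl l) ψ) := by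
  apply hd_empty; apply deduction
  exact h.cut fun χ hχ => Hd.mp (Hd.thm (mem_conjl hχ)) (Hd.ax (Set.mem_insert _ _))

theorem consistent_iff {Γ : Set (Form Ags)} : Consistent Γ ↔ ¬ Hd Γ Form.bot := by
  constructor
  · rintro hc h
    obtain ⟨l, hl, hp⟩ := hd_compact h
    exact hc ⟨l, hl, hp⟩
  · rintro h ⟨l, hl, hp⟩
    exact h (Hd.mp (Hd.thm hp) (conjl_intro fun φ hφ => Hd.ax (hl φ hφ)))

theorem mcs_hd_mem {w : Set (Form Ags)} (hw : MCS w) {φ} (h : Hd w φ) : φ ∈ w := by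
  rcases hw.2 φ with hm | hm
  · exact hm
  · exact absurd (Hd.mp (Hd.ax hm) h) (consistent_iff.1 hw.1)

end StitAux

namespace StitAux

variable {Ags : Type}

theorem prov_contra {φ ψ : Form Ags} (h : Prov (imp φ ψ)) :
    Prov (imp (neg ψ) (neg φ)) := by
  apply hd_empty; apply deduction; apply deduction
  exact Hd.mp (Hd.ax (Set.mem_insert_of_mem _ (Set.mem_insert _ _)))
    (Hd.mp (Hd.thm h) (Hd.ax (Set.mem_insert _ _)))

theorem prov_box_mono {φ ψ : Form Ags} (h : Prov (imp φ ψ)) :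
    Prov (imp (box φ) (box ψ)) :=
  Prov.mp (Prov.boxK φ ψ) (Prov.boxNec h)

theorem prov_act_mono (a : Ags) {φ ψ : Form Ags} (h : Prov (imp φ ψ)) :
    Prov (imp (act a φ) (act a ψ)) :=
  Prov.mp (Prov.actK a φ ψ) (Prov.actNec a h)

theorem prov_dia_mono {φ ψ : Form Ags} (h : Prov (imp φ ψ)) :
    Prov (imp (dia φ) (dia ψ)) :=
  prov_contra (prov_box_mono (prov_contra h))

theorem prov_box_conj (φ ψ : Form Ags) :
    Prov (imp (box φ) (imp (box ψ) (box (conj φ ψ)))) := by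
  apply hd_empty; apply deduction; apply deduction
  have h1 : Prov (imp (box φ) (box (imp ψ (conj φ ψ)))) :=
    Prov.mp (Prov.boxK φ (imp ψ (conj φ ψ))) (Prov.boxNec (prov_conj_intro φ ψ))
  have hbφ : Hd (insert (box ψ) (insert (box φ) (∅ : Set (Form Ags)))) (box φ) :=
    Hd.ax (Set.mem_insert_of_mem _ (Set.mem_insert _ _))
  have hbψ : Hd (insert (box ψ) (insert (box φ) (∅ : Set (Form Ags)))) (box ψ) :=
    Hd.ax (Set.mem_insert _ _)
  exact Hd.mp (Hd.mp (Hd.thm (Prov.boxK ψ (conj φ ψ))) (Hd.mp (Hd.thm h1) hbφ)) hbψ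

theorem prov_obj_conj (a : Ags) (φ ψ : Form Ags) :
    Prov (imp (obj a φ) (imp (obj a ψ) (obj a (conj φ ψ)))) := by
  apply hd_empty; apply deduction; apply deduction
  have h1 : Prov (imp (obj a φ) (obj a (imp ψ (conj φ ψ)))) :=
    Prov.mp (Prov.a1 a φ (imp ψ (conj φ ψ))) (Prov.objNec a (prov_conj_intro φ ψ))
  have hbφ : Hd (insert (obj a ψ) (insert (obj a φ) (∅ : Set (Form Ags)))) (obj a φ) :=
    Hd.ax (Set.mem_insert_of_mem _ (Set.mem_insert _ _))
  have hbψ : Hd (insert (obj a ψ) (insert (obj a φ) (∅ : Set (Form Ags)))) (obj a ψ) :=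
    Hd.ax (Set.mem_insert _ _)
  exact Hd.mp (Hd.mp (Hd.thm (Prov.a1 a ψ (conj φ ψ))) (Hd.mp (Hd.thm h1) hbφ)) hbψ

theorem boxed_conjl {l : List (Form Ags)} (h : ∀ φ ∈ l, ∃ ψ, φ = box ψ) :
    Prov (imp (conjl l) (box (conjl l))) := by
  induction l with
  | nil => exact Prov.mp (Prov.pl1 _ _) (Prov.boxNec (prov_id Form.bot))
  | cons φ t ih =>
    obtain ⟨ψ, rfl⟩ := h φ (List.mem_cons_self)
    apply hd_empty; apply deduction
    set Γ : Set (Form Ags) := insert (conj (box ψ) (conjl t)) ∅ with hΓ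
    have hax : Hd Γ (conj (box ψ) (conjl t)) := Hd.ax (Set.mem_insert _ _)
    have hφ : Hd Γ (box ψ) := Hd.mp (Hd.thm (prov_conj_left _ _)) hax
    have ht : Hd Γ (conjl t) := Hd.mp (Hd.thm (prov_conj_right _ _)) hax
    have hbφ : Hd Γ (box (box ψ)) := Hd.mp (Hd.thm (Prov.box4 ψ)) hφ
    have hbt : Hd Γ (box (conjl t)) :=
      Hd.mp (Hd.thm (ih fun χ hχ => h χ (List.mem_cons_of_mem _ hχ))) ht
    exact Hd.mp (Hd.mp (Hd.thm (prov_box_conj _ _)) hbφ) hbt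

theorem obj_conjl {w : Set (Form Ags)} (hw : MCS w) (a : Ags) {l : List (Form Ags)}
    (h : ∀ φ ∈ l, obj a φ ∈ w) : obj a (conjl l) ∈ w := by
  induction l with
  | nil => exact mcs_hd_mem hw (Hd.thm (Prov.objNec a (prov_id Form.bot)))
  | cons φ t ih =>
    refine mcs_hd_mem hw (Hd.mp (Hd.mp (Hd.thm (prov_obj_conj a φ (conjl t)))
      (Hd.ax (h φ (List.mem_cons_self)))) (Hd.ax (ih ?_)))
    exact fun χ hχ => h χ (List.mem_cons_of_mem _ hχ)

theorem consistent_mono {Γ Δ : Set (Form Ags)} (h : Γ ⊆ Δ) (hc : Consistent Δ) :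
    Consistent Γ := by
  rintro ⟨l, hl, hp⟩
  exact hc ⟨l, fun φ hφ => h (hl φ hφ), hp⟩

theorem lindenbaum {Γ : Set (Form Ags)} (h : Consistent Γ) :
    ∃ u, Γ ⊆ u ∧ MCS u := by
  have hchainub : ∀ c ⊆ {s : Set (Form Ags) | Consistent s}, IsChain (· ⊆ ·) c →
      c.Nonempty → ∃ ub ∈ {s : Set (Form Ags) | Consistent s}, ∀ s ∈ c, s ⊆ ub := by
    intro c hc hchain hne
    refine ⟨⋃₀ c, ?_, fun s hs => Set.subset_sUnion_of_mem hs⟩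
    rw [Set.mem_setOf_eq, consistent_iff]
    intro hb
    obtain ⟨l, hl, hp⟩ := hd_compact hb
    have hex : ∃ s ∈ c, ∀ φ ∈ l, φ ∈ s := by
      clear hp
      induction l with
      | nil => obtain ⟨s, hs⟩ := hne; exact ⟨s, hs, by simp⟩
      | cons φ t ih =>
        obtain ⟨s, hs, hts⟩ := ih fun χ hχ => hl χ (List.mem_cons_of_mem _ hχ)
        obtain ⟨s', hs', hφ⟩ := hl φ (List.mem_cons_self)
        rcases eq_or_ne s' s with rfl | hne'
        · exact ⟨s', hs', fun χ hχ => by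
            rcases List.mem_cons.1 hχ with rfl | hχ; exacts [hφ, hts χ hχ]⟩
        · rcases hchain hs' hs hne' with hss | hss
          · exact ⟨s, hs, fun χ hχ => by
              rcases List.mem_cons.1 hχ with rfl | hχ; exacts [hss hφ, hts χ hχ]⟩
          · exact ⟨s', hs', fun χ hχ => by
              rcases List.mem_cons.1 hχ with rfl | hχ; exacts [hφ, hss (hts χ hχ)]⟩
    obtain ⟨s, hs, hmem⟩ := hex
    exact consistent_iff.1 (hc hs)
      (Hd.mp (Hd.thm hp) (conjl_intro fun χ hχ => Hd.ax (hmem χ hχ)))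
  obtain ⟨m, hsub, hm, hmax⟩ :=
    zorn_subset_nonempty {s : Set (Form Ags) | Consistent s} hchainub Γ h
  refine ⟨m, hsub, hm, fun φ => ?_⟩
  by_contra hcon2
  push_neg at hcon2
  obtain ⟨h1, h2⟩ := hcon2
  have key : ∀ χ : Form Ags, χ ∉ m → Hd m (neg χ) := by
    intro χ hχ
    have hinc : ¬ Consistent (insert χ m) := by
      intro hcon
      exact hχ (hmax hcon (Set.subset_insert _ _) (Set.mem_insert _ _))
    rw [consistent_iff] at hinc
    push_neg at hinc
    exact deduction hinc
  exact consistent_iff.1 hm (Hd.mp (key (neg φ) h2) (key φ h1))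

end StitAux

namespace StitAux

variable {Ags : Type}

theorem sigma_box_consistent {w : Set (Form Ags)} (hw : MCS w) :
    Consistent (SigmaAll w ∪ {χ | ∃ ψ, χ = Form.box ψ ∧ Form.box ψ ∈ w}) := by
  classical
  rw [consistent_iff]
  intro hb
  obtain ⟨l, hl, hp⟩ := hd_compact hb
  set B : Set (Form Ags) := {χ | ∃ ψ, χ = Form.box ψ ∧ Form.box ψ ∈ w} with hB
  set lb := l.filter (fun φ => decide (φ ∈ B)) with hlb
  set la := l.filter (fun φ => !decide (φ ∈ B)) with hla
  have hla_mem : ∀ φ ∈ la, φ ∈ SigmaAll w := by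
    intro φ hφ
    obtain ⟨h1, h2⟩ := List.mem_filter.1 hφ
    have hnB : φ ∉ B := by simpa using h2
    exact (hl φ h1).resolve_right hnB
  have hlb_mem : ∀ φ ∈ lb, φ ∈ B := by
    intro φ hφ
    obtain ⟨h1, h2⟩ := List.mem_filter.1 hφ
    simpa using h2
  -- `conjl lb → ¬ conjl la` is provable
  have hA : Prov (imp (conjl lb) (neg (conjl la))) := by
    apply list_deduction
    apply deduction
    refine Hd.mp (Hd.thm hp) (conjl_intro ?_)
    intro φ hφ
    by_cases hφB : φ ∈ B
    · exact Hd.ax (Set.mem_insert_of_mem _ (List.mem_filter.2 ⟨hφ, by simpa using hφB⟩))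
    · have : φ ∈ la := List.mem_filter.2 ⟨hφ, by simpa using hφB⟩
      exact Hd.mp (Hd.thm (mem_conjl this)) (Hd.ax (Set.mem_insert _ _))
  have hconjlb_w : conjl lb ∈ w := by
    refine mcs_hd_mem hw (conjl_intro fun φ hφ => Hd.ax ?_)
    obtain ⟨ψ, rfl, hψ⟩ := hlb_mem φ hφ
    exact hψ
  have hboxlb : Form.box (conjl lb) ∈ w := by
    refine mcs_hd_mem hw (Hd.mp (Hd.thm (boxed_conjl ?_)) (Hd.ax hconjlb_w))
    intro φ hφ
    obtain ⟨ψ, rfl, _⟩ := hlb_mem φ hφ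
    exact ⟨ψ, rfl⟩
  have hboxneg : Form.box (neg (conjl la)) ∈ w :=
    mcs_hd_mem hw (Hd.mp (Hd.thm (prov_box_mono hA)) (Hd.ax hboxlb))
  -- extract agent/formula pairs from `la`
  have hex : ∀ m : List (Form Ags), (∀ φ ∈ m, φ ∈ SigmaAll w) →
      ∃ lp : List (Ags × Form Ags), m = lp.map (fun p => Form.act p.1 p.2) ∧
        ∀ p ∈ lp, Form.obj p.1 p.2 ∈ w := by
    intro m
    induction m with
    | nil => exact fun _ => ⟨[], rfl, by simp⟩
    | cons φ t ih =>
      intro h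
      obtain ⟨lp, heq, hobj⟩ := ih fun χ hχ => h χ (List.mem_cons_of_mem _ hχ)
      have hφ := h φ (List.mem_cons_self)
      rw [SigmaAll, Set.mem_iUnion] at hφ
      obtain ⟨a, ψ, rfl, hw'⟩ := hφ
      refine ⟨(a, ψ) :: lp, by simp [heq], ?_⟩
      intro p hp
      rcases List.mem_cons.1 hp with rfl | hp
      · exact hw'
      · exact hobj p hp
  obtain ⟨lp, hla_eq, hobj⟩ := hex la hla_mem
  set agents := (lp.map Prod.fst).dedup with hagents
  set χf : Ags → Form Ags :=
    fun a => conjl (lp.filterMap fun p => if p.1 = a then some p.2 else none) with hχf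
  have hχobj : ∀ a : Ags, Form.obj a (χf a) ∈ w := by
    intro a
    refine obj_conjl hw a ?_
    intro φ hφ
    obtain ⟨p, hp, hsome⟩ := List.mem_filterMap.1 hφ
    by_cases hpa : p.1 = a
    · rw [if_pos hpa] at hsome
      obtain rfl := Option.some.inj hsome
      exact hpa ▸ hobj p hp
    · rw [if_neg hpa] at hsome; cases hsome
  have hdia : ∀ a : Ags, dia (Form.act a (χf a)) ∈ w := fun a =>
    mcs_hd_mem hw (Hd.mp (Hd.thm (Prov.oic a (χf a))) (Hd.ax (hχobj a)))
  set lq := agents.map fun a => (a, χf a) with hlq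
  have hpw : lq.Pairwise fun p q => p.1 ≠ q.1 := by
    refine List.Pairwise.map _ ?_ (List.nodup_dedup _)
    intro a b hab
    simpa using hab
  have hpremise : conjl (lq.map fun p => dia (Form.act p.1 p.2)) ∈ w := by
    refine mcs_hd_mem hw (conjl_intro fun φ hφ => Hd.ax ?_)
    obtain ⟨p, hp, rfl⟩ := List.mem_map.1 hφ
    obtain ⟨a, _, rfl⟩ := List.mem_map.1 hp
    exact hdia a
  have hdiaq : dia (conjl (lq.map fun p => Form.act p.1 p.2)) ∈ w :=
    mcs_hd_mem hw (Hd.mp (Hd.thm (Prov.ia lq hpw)) (Hd.ax hpremise))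
  have himp : Prov (imp (conjl (lq.map fun p => Form.act p.1 p.2)) (conjl la)) := by
    apply list_deduction
    apply conjl_intro
    intro φ hφ
    rw [hla_eq] at hφ
    obtain ⟨p, hp, rfl⟩ := List.mem_map.1 hφ
    have hag : p.1 ∈ agents := List.mem_dedup.2 (List.mem_map_of_mem hp)
    have hmem : Form.act p.1 (χf p.1) ∈ lq.map fun q => Form.act q.1 q.2 :=
      List.mem_map.2 ⟨(p.1, χf p.1), List.mem_map.2 ⟨p.1, hag, rfl⟩, rfl⟩
    have hχimp : Prov (imp (χf p.1) p.2) :=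
      mem_conjl (List.mem_filterMap.2 ⟨p, hp, by simp⟩)
    exact Hd.mp (Hd.thm (prov_act_mono _ hχimp)) (Hd.ax hmem)
  have hdiala : dia (conjl la) ∈ w :=
    mcs_hd_mem hw (Hd.mp (Hd.thm (prov_dia_mono himp)) (Hd.ax hdiaq))
  exact consistent_iff.1 hw.1 (Hd.mp (Hd.ax hdiala) (Hd.ax hboxneg))

end StitAux

/-- `Σ^w` is consistent, `Σ^w ∪ {□ψ : □ψ ∈ w}` is consistent, and hence there is
an MCS `u` with `w R_□ u` and `Value_O(u) = 1`, i.e. `Σ^u ⊆ u`. -/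
theorem statement11 {Ags : Type} (w : Set (Form Ags)) (hw : MCS w) :
    Consistent (SigmaAll w) ∧
    Consistent (SigmaAll w ∪ {χ | ∃ ψ, χ = Form.box ψ ∧ Form.box ψ ∈ w}) ∧
    ∃ u, MCS u ∧ RboxC w u ∧ SigmaAll u ⊆ u := by
  have h2 := StitAux.sigma_box_consistent hw
  refine ⟨StitAux.consistent_mono Set.subset_union_left h2, h2, ?_⟩
  obtain ⟨u, hsub, hu⟩ := StitAux.lindenbaum h2
  have hrb : RboxC w u := by
    intro φ hφ
    have hbu : Form.box φ ∈ u := hsub (Or.inr ⟨φ, rfl, hφ⟩)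
    exact StitAux.mcs_hd_mem hu
      (StitAux.Hd.mp (StitAux.Hd.thm (Prov.boxT φ)) (StitAux.Hd.ax hbu))
  refine ⟨u, hu, hrb, ?_⟩
  intro x hx
  rw [SigmaAll, Set.mem_iUnion] at hx
  obtain ⟨a, φ, rfl, hobj⟩ := hx
  by_cases hbw : Form.box (Form.obj a φ) ∈ w
  · have how : Form.obj a φ ∈ w := StitAux.mcs_hd_mem hw
      (StitAux.Hd.mp (StitAux.Hd.thm (Prov.boxT _)) (StitAux.Hd.ax hbw))
    exact hsub (Or.inl (Set.mem_iUnion.2 ⟨a, φ, rfl, how⟩))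
  · have hdisj : disj (Form.box (Form.obj a φ)) (Form.box (neg (Form.obj a φ))) ∈ w :=
      StitAux.mcs_hd_mem hw (StitAux.Hd.thm (Prov.a3 a φ))
    have hnb : neg (Form.box (Form.obj a φ)) ∈ w := (hw.2 _).resolve_left hbw
    have hb2 : Form.box (neg (Form.obj a φ)) ∈ w := StitAux.mcs_hd_mem hw
      (StitAux.Hd.mp (StitAux.Hd.ax hdisj) (StitAux.Hd.ax hnb))
    have hnu : neg (Form.obj a φ) ∈ u := hrb _ hb2
    exact absurd (StitAux.Hd.mp (StitAux.Hd.ax hnu) (StitAux.Hd.ax hobj))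
      (StitAux.consistent_iff.1 hu.1)
end

section
/- Let M be a Kripke-estit model and M^T its associated branching-time model. For every cell L in Choice_α at the class of w and every moment in the associated tree: L is optimal with respect to the dominance ordering defined via states in M if and only if the corresponding set L^T = {h_v : v ∈ L} of histories is optimal with respect to the dominance ordering in M^T, where the value of history h_v equals the value of v. -/
/-- The `R_α`-choice cell of `v`. -/
def cellW {W Ags : Type} (Ract : Ags → W → W → Prop) (a : Ags) (v : W) :
    Set W := {u | Ract a v u}

/-- The choice cells of agent `a` at the `R_□`-class of `w`. -/
def cellsW {W Ags : Type} (Rbox : W → W → Prop) (Ract : Ags → W → W → Prop)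
    (a : Ags) (w : W) : Set (Set W) :=
  {C | ∃ v, Rbox w v ∧ C = cellW Ract a v}

/-- A state for agent `a` at the class of `w`: an intersection of the other
agents' choice cells, given by a selection function `s`. -/
def isStateW {W Ags : Type} (Rbox : W → W → Prop) (Ract : Ags → W → W → Prop)
    (a : Ags) (w : W) (S : Set W) : Prop :=
  ∃ s : Ags → W, (∀ b, Rbox w (s b)) ∧
    S = {u | ∀ b, b ≠ a → Ract b (s b) u}

/-- Dominance relativized to states: `L ⪯ N` iff for every state `S`, every
element of `L ∩ S` has value at most every element of `N ∩ S`. -/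
def domV {X : Type} (Value : X → ℝ) (States : Set (Set X)) (L N : Set X) :
    Prop :=
  ∀ S ∈ States, ∀ x ∈ L ∩ S, ∀ y ∈ N ∩ S, Value x ≤ Value y

/-- Strict dominance. -/
def sdomV {X : Type} (Value : X → ℝ) (States : Set (Set X)) (L N : Set X) :
    Prop :=
  domV Value States L N ∧ ¬ domV Value States N L

/-- Optimality among a family of cells. -/
def optimalV {X : Type} (Value : X → ℝ) (Cells States : Set (Set X))
    (L : Set X) : Prop :=
  ¬ ∃ N ∈ Cells, sdomV Value States L N

theorem domV_image_iff {X Y : Type} {f : X → Y} (hf : Function.Injective f) (V : Y → ℝ)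
    (States : Set (Set X)) (L N : Set X) :
    domV V ((f '' ·) '' States) (f '' L) (f '' N) ↔ domV (V ∘ f) States L N := by
  simp only [domV, Set.forall_mem_image, ← Set.image_inter hf, Function.comp_apply]

theorem sdomV_image_iff {X Y : Type} {f : X → Y} (hf : Function.Injective f) (V : Y → ℝ)
    (States : Set (Set X)) (L N : Set X) :
    sdomV V ((f '' ·) '' States) (f '' L) (f '' N) ↔ sdomV (V ∘ f) States L N := by
  simp only [sdomV, domV_image_iff hf]

theorem optimalV_image_iff {X Y : Type} {f : X → Y} (hf : Function.Injective f) (V : Y → ℝ)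
    (Cells States : Set (Set X)) (L : Set X) :
    optimalV V ((f '' ·) '' Cells) ((f '' ·) '' States) (f '' L) ↔
      optimalV (V ∘ f) Cells States L := by
  simp only [optimalV, Set.exists_mem_image, sdomV_image_iff hf]

theorem statement16_general {W H Ags : Type}
    (Rbox : W → W → Prop)
    (Ract : Ags → W → W → Prop)
    (ValueO : W → ℝ) (e : W ≃ H)
    (a : Ags) (w v : W) :
    optimalV ValueO (cellsW Rbox Ract a w)
        {S | isStateW Rbox Ract a w S} (cellW Ract a v) ↔
      optimalV (fun h => ValueO (e.symm h))
        ((fun L => e '' L) '' cellsW Rbox Ract a w)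
        ((fun S => e '' S) '' {S | isStateW Rbox Ract a w S})
        (e '' cellW Ract a v) := by
  rw [optimalV_image_iff e.injective]
  simp only [Function.comp_def, Equiv.symm_apply_apply]

/-- Optimality transfer between a Kripke-estit model and its associated
branching-time model: a cell `L` at the class of `w` is optimal iff the
corresponding set of histories `L^T = e '' L` (where `e` is the bijection
`v ↦ h_v` and `Value_O(h_v) = Value_O(v)`) is optimal for the transported
cells and states. -/
theorem statement16 {W H Ags : Type} [Fintype Ags]
    (Rbox : W → W → Prop) (hR : Equivalence Rbox)
    (Ract : Ags → W → W → Prop) (hRa : ∀ a, Equivalence (Ract a))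
    (hsub : ∀ a w v, Ract a w v → Rbox w v)
    (ValueO : W → ℝ) (e : W ≃ H)
    (a : Ags) (w v : W) (hv : Rbox w v) :
    optimalV ValueO (cellsW Rbox Ract a w)
        {S | isStateW Rbox Ract a w S} (cellW Ract a v) ↔
      optimalV (fun h => ValueO (e.symm h))
        ((fun L => e '' L) '' cellsW Rbox Ract a w)
        ((fun S => e '' S) '' {S | isStateW Rbox Ract a w S})
        (e '' cellW Ract a v) :=
  statement16_general Rbox Ract ValueO e a w v
end

section
/- Truth transfer: for a Kripke-estit model M, its associated BT-model M^T, any formula φ of the language with □, [α], K_α, ⊙[α], ⊙_S[α], and any world w: M, w ⊨ φ if and only if M^T, ⟨[w], h_w⟩ ⊨ φ. -/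
/-- An (epistemic act-utilitarian bi-valued) branching-time model, presented
through its moments, histories, incidence relation, choice structure, states,
epistemic relation on situations, value functions and valuation. -/
structure BTM (Ags : Type) where
  M : Type                                -- moments
  Hst : Type                              -- histories
  mem : M → Hst → Prop                    -- `m ∈ h`
  choice : Ags → M → Hst → Set Hst        -- `Choice^m_α(h)`
  cells : Ags → M → Set (Set Hst)         -- `Choice^m_α`
  states : Ags → M → Set (Set Hst)        -- `State^m_α`
  eps : Ags → M → Hst → M → Hst → Prop    -- `⟨m,h⟩ ∼_α ⟨m',h'⟩`
  valO : Hst → ℝ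
  valS : Hst → ℝ
  val : Nat → M → Hst → Prop

namespace BTM

variable {Ags : Type}

/-- Moment-level indistinguishability `m ∼_α m'`. -/
def mEps (B : BTM Ags) (a : Ags) (m m' : B.M) : Prop :=
  ∃ h h', B.mem m h ∧ B.mem m' h' ∧ B.eps a m h m' h'

/-- The epistemic cluster `[L]^{m'}_α` of a set `L` of histories at moment `m`,
taken at moment `m'`. -/
def cluster (B : BTM Ags) (a : Ags) (m : B.M) (L : Set B.Hst) (m' : B.M) :
    Set B.Hst :=
  {h' | B.mem m' h' ∧ ∃ h ∈ L, B.eps a m h m' h'}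

/-- Objective dominance `L ⪯ N` at moment `m` (relativized to states). -/
def domO (B : BTM Ags) (a : Ags) (m : B.M) (L N : Set B.Hst) : Prop :=
  ∀ S ∈ B.states a m, ∀ x ∈ L ∩ S, ∀ y ∈ N ∩ S, B.valO x ≤ B.valO y

/-- Strict objective dominance. -/
def sdomO (B : BTM Ags) (a : Ags) (m : B.M) (L N : Set B.Hst) : Prop :=
  B.domO a m L N ∧ ¬ B.domO a m N L

/-- Subjective dominance `L ⪯_s N` at moment `m`, via epistemic clusters. -/
def domS (B : BTM Ags) (a : Ags) (m : B.M) (L N : Set B.Hst) : Prop :=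
  ∀ m', B.mEps a m m' → ∀ S ∈ B.states a m',
    ∀ x ∈ B.cluster a m L m' ∩ S, ∀ y ∈ B.cluster a m N m' ∩ S,
      B.valS x ≤ B.valS y

/-- Strict subjective dominance. -/
def sdomS (B : BTM Ags) (a : Ags) (m : B.M) (L N : Set B.Hst) : Prop :=
  B.domS a m L N ∧ ¬ B.domS a m N L

/-- Satisfaction at a situation `⟨m,h⟩` (with the sure-thing-principle
semantics for the ought operators). -/
def sat (B : BTM Ags) : Form Ags → B.M → B.Hst → Prop
  | Form.atom n, m, h => B.val n m h
  | Form.bot, _, _ => False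
  | Form.imp φ ψ, m, h => sat B φ m h → sat B ψ m h
  | Form.box φ, m, _ => ∀ h', B.mem m h' → sat B φ m h'
  | Form.act a φ, m, h => ∀ h' ∈ B.choice a m h, sat B φ m h'
  | Form.know a φ, m, h => ∀ m' h', B.eps a m h m' h' → sat B φ m' h'
  | Form.obj a φ, m, _ =>
      ∀ L ∈ B.cells a m, (∃ hL ∈ L, ¬ sat B φ m hL) →
        ∃ L' ∈ B.cells a m, B.sdomO a m L L' ∧
          ∀ L'' ∈ B.cells a m, (L'' = L' ∨ B.domO a m L' L'') →
            ∀ h'' ∈ L'', sat B φ m h''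
  | Form.subj a φ, m, _ =>
      ∀ L ∈ B.cells a m,
        (∃ m', B.mEps a m m' ∧ ∃ hL ∈ B.cluster a m L m', ¬ sat B φ m' hL) →
          ∃ L' ∈ B.cells a m, B.sdomS a m L L' ∧
            ∀ L'' ∈ B.cells a m, (L'' = L' ∨ B.domS a m L' L'') →
              ∀ m'', B.mEps a m m'' →
                ∀ h'' ∈ B.cluster a m L'' m'', sat B φ m'' h''

end BTM

/-- A Kripke-estit model. -/
structure KM (Ags : Type) where
  W : Type
  Rbox : W → W → Prop
  rbox_equiv : Equivalence Rbox
  Ract : Ags → W → W → Prop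
  ract_equiv : ∀ a, Equivalence (Ract a)
  ract_sub : ∀ a w v, Ract a w v → Rbox w v
  Eps : Ags → W → W → Prop
  eps_equiv : ∀ a, Equivalence (Eps a)
  valO : W → ℝ
  valS : W → ℝ
  val : Nat → Set W

namespace KM

variable {Ags : Type}

def cellK (K : KM Ags) (a : Ags) (v : K.W) : Set K.W := {u | K.Ract a v u}

def cellsK (K : KM Ags) (a : Ags) (w : K.W) : Set (Set K.W) :=
  {C | ∃ v, K.Rbox w v ∧ C = K.cellK a v}

def stateK (K : KM Ags) (a : Ags) (w : K.W) (S : Set K.W) : Prop :=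
  ∃ s : Ags → K.W, (∀ b, K.Rbox w (s b)) ∧
    S = {u | ∀ b, b ≠ a → K.Ract b (s b) u}

def mEpsK (K : KM Ags) (a : Ags) (w w' : K.W) : Prop :=
  ∃ v v', K.Rbox w v ∧ K.Rbox w' v' ∧ K.Eps a v v'

def clusterK (K : KM Ags) (a : Ags) (L : Set K.W) (w' : K.W) : Set K.W :=
  {u | K.Rbox w' u ∧ ∃ o ∈ L, K.Eps a o u}

def domOK (K : KM Ags) (a : Ags) (w : K.W) (L N : Set K.W) : Prop :=
  ∀ S, K.stateK a w S → ∀ x ∈ L ∩ S, ∀ y ∈ N ∩ S, K.valO x ≤ K.valO y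

def sdomOK (K : KM Ags) (a : Ags) (w : K.W) (L N : Set K.W) : Prop :=
  K.domOK a w L N ∧ ¬ K.domOK a w N L

def domSK (K : KM Ags) (a : Ags) (w : K.W) (L N : Set K.W) : Prop :=
  ∀ w', K.mEpsK a w w' → ∀ S, K.stateK a w' S →
    ∀ x ∈ K.clusterK a L w' ∩ S, ∀ y ∈ K.clusterK a N w' ∩ S,
      K.valS x ≤ K.valS y

def sdomSK (K : KM Ags) (a : Ags) (w : K.W) (L N : Set K.W) : Prop :=
  K.domSK a w L N ∧ ¬ K.domSK a w N L

/-- Satisfaction in a Kripke-estit model. -/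
def satK (K : KM Ags) : Form Ags → K.W → Prop
  | Form.atom n, w => w ∈ K.val n
  | Form.bot, _ => False
  | Form.imp φ ψ, w => satK K φ w → satK K ψ w
  | Form.box φ, w => ∀ v, K.Rbox w v → satK K φ v
  | Form.act a φ, w => ∀ v, K.Ract a w v → satK K φ v
  | Form.know a φ, w => ∀ v, K.Eps a w v → satK K φ v
  | Form.obj a φ, w =>
      ∀ L ∈ K.cellsK a w, (∃ z ∈ L, ¬ satK K φ z) →
        ∃ L' ∈ K.cellsK a w, K.sdomOK a w L L' ∧
          ∀ L'' ∈ K.cellsK a w, (L'' = L' ∨ K.domOK a w L' L'') →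
            ∀ z ∈ L'', satK K φ z
  | Form.subj a φ, w =>
      ∀ L ∈ K.cellsK a w,
        (∃ w', K.mEpsK a w w' ∧ ∃ z ∈ K.clusterK a L w', ¬ satK K φ z) →
          ∃ L' ∈ K.cellsK a w, K.sdomSK a w L L' ∧
            ∀ L'' ∈ K.cellsK a w, (L'' = L' ∨ K.domSK a w L' L'') →
              ∀ w'', K.mEpsK a w w'' → ∀ z ∈ K.clusterK a L'' w'', satK K φ z

/-- The setoid of the `R_□`-classes. -/
def setoid (K : KM Ags) : Setoid K.W := ⟨K.Rbox, K.rbox_equiv⟩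

/-- The associated branching-time model of a Kripke-estit model: moments are
worlds (terminal), `R_□`-classes, and a root; histories are identified with
worlds (`h_v ↦ v`). -/
def assoc (K : KM Ags) : BTM Ags where
  M := Sum K.W (Sum (Quotient K.setoid) Unit)
  Hst := K.W
  mem m v :=
    match m with
    | Sum.inl u => u = v
    | Sum.inr (Sum.inl c) => Quotient.mk K.setoid v = c
    | Sum.inr (Sum.inr _) => True
  choice a m v :=
    match m with
    | Sum.inl u => {u}
    | Sum.inr (Sum.inl _) => {u | K.Ract a v u}
    | Sum.inr (Sum.inr _) => Set.univ
  cells a m :=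
    match m with
    | Sum.inl u => {{u}}
    | Sum.inr (Sum.inl c) =>
        {C | ∃ v, Quotient.mk K.setoid v = c ∧ C = {u | K.Ract a v u}}
    | Sum.inr (Sum.inr _) => {Set.univ}
  states a m :=
    match m with
    | Sum.inl u => {{u}}
    | Sum.inr (Sum.inl c) =>
        {S | ∃ s : Ags → K.W, (∀ b, Quotient.mk K.setoid (s b) = c) ∧
          S = {u | ∀ b, b ≠ a → K.Ract b (s b) u}}
    | Sum.inr (Sum.inr _) => {Set.univ}
  eps a m v m' v' :=
    match m, m' with
    | Sum.inl u, Sum.inl u' => u = v ∧ u' = v' ∧ u = u'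
    | Sum.inr (Sum.inl c), Sum.inr (Sum.inl c') =>
        Quotient.mk K.setoid v = c ∧ Quotient.mk K.setoid v' = c' ∧
          K.Eps a v v'
    | Sum.inr (Sum.inr _), Sum.inr (Sum.inr _) => True
    | _, _ => False
  valO := K.valO
  valS := K.valS
  val n m v := m = Sum.inr (Sum.inl (Quotient.mk K.setoid v)) ∧ v ∈ K.val n

end KM
namespace KM

variable {Ags : Type} (K : KM Ags)

/-- The moment `[w]` in the associated BT model. -/
def mmt (w : K.W) : (K.assoc).M := Sum.inr (Sum.inl (Quotient.mk K.setoid w))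

lemma mmt_eq' {v w : K.W} (h : Quotient.mk K.setoid v = Quotient.mk K.setoid w) :
    K.mmt w = K.mmt v :=
  congrArg (fun c => (Sum.inr (Sum.inl c) : (K.assoc).M)) h.symm

lemma qeq (v w : K.W) :
    Quotient.mk K.setoid v = Quotient.mk K.setoid w ↔ K.Rbox w v :=
  ⟨fun h => K.rbox_equiv.symm (Quotient.exact h),
   fun h => Quotient.sound (K.rbox_equiv.symm h)⟩

lemma mem_mmt (w v : K.W) : (K.assoc).mem (K.mmt w) v ↔ K.Rbox w v := by
  show Quotient.mk K.setoid v = Quotient.mk K.setoid w ↔ _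
  exact K.qeq v w

lemma cells_mmt (a : Ags) (w : K.W) :
    (K.assoc).cells a (K.mmt w) = K.cellsK a w := by
  ext C
  show (∃ v, Quotient.mk K.setoid v = Quotient.mk K.setoid w ∧
      C = {u | K.Ract a v u}) ↔ _
  simp only [cellsK, cellK, Set.mem_setOf_eq, K.qeq]
  exact Iff.rfl

lemma states_mmt (a : Ags) (w : K.W) :
    (K.assoc).states a (K.mmt w) = {S | K.stateK a w S} := by
  ext S
  show (∃ s : Ags → K.W, (∀ b, Quotient.mk K.setoid (s b) = Quotient.mk K.setoid w) ∧
      S = {u | ∀ b, b ≠ a → K.Ract b (s b) u}) ↔ _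
  simp only [stateK, Set.mem_setOf_eq, K.qeq]
  exact Iff.rfl

lemma cellsK_sub {a : Ags} {w : K.W} {L : Set K.W} (hL : L ∈ K.cellsK a w) :
    ∀ u ∈ L, K.Rbox w u := by
  obtain ⟨v, hv, rfl⟩ := hL
  intro u hu
  exact K.rbox_equiv.trans hv (K.ract_sub a v u hu)

lemma domO_mmt (a : Ags) (w : K.W) (L N : Set K.W) :
    (K.assoc).domO a (K.mmt w) L N ↔ K.domOK a w L N := by
  simp only [BTM.domO, domOK, states_mmt, Set.mem_setOf_eq]
  rfl

lemma mEps_iff (a : Ags) (w w' : K.W) :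
    (K.assoc).mEps a (K.mmt w) (K.mmt w') ↔ K.mEpsK a w w' := by
  constructor
  · rintro ⟨v, v', -, -, h1, h2, h3⟩
    exact ⟨v, v', (K.qeq v w).1 h1, (K.qeq v' w').1 h2, h3⟩
  · rintro ⟨v, v', h1, h2, h3⟩
    exact ⟨v, v', (K.qeq v w).2 h1, (K.qeq v' w').2 h2,
      (K.qeq v w).2 h1, (K.qeq v' w').2 h2, h3⟩

lemma mEps_form {a : Ags} {w : K.W} {m' : (K.assoc).M}
    (h : (K.assoc).mEps a (K.mmt w) m') : ∃ w', m' = K.mmt w' := by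
  obtain ⟨v, v', -, -, he⟩ := h
  match m' with
  | Sum.inl u => exact absurd he (by exact fun h => h)
  | Sum.inr (Sum.inl c) =>
    obtain ⟨w', rfl⟩ := Quotient.exists_rep c
    exact ⟨w', rfl⟩
  | Sum.inr (Sum.inr u) => exact absurd he (by exact fun h => h)

lemma cluster_mmt {a : Ags} {w : K.W} {L : Set K.W}
    (hL : ∀ u ∈ L, K.Rbox w u) (w' : K.W) :
    (K.assoc).cluster a (K.mmt w) L (K.mmt w') = K.clusterK a L w' := by
  ext u
  show (Quotient.mk K.setoid u = Quotient.mk K.setoid w' ∧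
      ∃ v ∈ L, Quotient.mk K.setoid v = Quotient.mk K.setoid w ∧
        Quotient.mk K.setoid u = Quotient.mk K.setoid w' ∧ K.Eps a v u) ↔ _
  simp only [clusterK, Set.mem_setOf_eq, K.qeq]
  constructor
  · rintro ⟨h1, v, hv, -, -, h3⟩
    exact ⟨(K.qeq u w').1 h1, v, hv, h3⟩
  · rintro ⟨h1, v, hv, h3⟩
    exact ⟨(K.qeq u w').2 h1, v, hv, hL v hv, (K.qeq u w').2 h1, h3⟩

lemma clusterK_sub {a : Ags} {w' : K.W} {L : Set K.W} :
    ∀ z ∈ K.clusterK a L w', K.Rbox w' z := fun _ hz => hz.1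

lemma domS_iff {a : Ags} {w : K.W} {L N : Set K.W}
    (hL : ∀ u ∈ L, K.Rbox w u) (hN : ∀ u ∈ N, K.Rbox w u) :
    (K.assoc).domS a (K.mmt w) L N ↔ K.domSK a w L N := by
  constructor
  · intro H w' hme S hS x hx y hy
    have := H (K.mmt w') ((K.mEps_iff a w w').2 hme) S
      (by rw [states_mmt]; exact hS)
    rw [K.cluster_mmt hL, K.cluster_mmt hN] at this
    exact this x hx y hy
  · intro H m' hme S hS x hx y hy
    obtain ⟨w', rfl⟩ := K.mEps_form hme
    rw [states_mmt] at hS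
    rw [K.cluster_mmt hL] at hx
    rw [K.cluster_mmt hN] at hy
    exact H w' ((K.mEps_iff a w w').1 hme) S hS x hx y hy

end KM

/-- Truth transfer: a Kripke-estit model `M` and its associated branching-time
model `M^T` satisfy the same formulas, at `w` and at `⟨[w], h_w⟩` respectively. -/
theorem statement17 {Ags : Type} (K : KM Ags) (φ : Form Ags) (w : K.W) :
    K.satK φ w ↔
      (K.assoc).sat φ (Sum.inr (Sum.inl (Quotient.mk K.setoid w))) w := by
  show K.satK φ w ↔ (K.assoc).sat φ (K.mmt w) w
  induction φ generalizing w with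
  | atom n =>
    constructor
    · intro h; exact ⟨rfl, h⟩
    · intro h; exact h.2
  | bot => exact Iff.rfl
  | imp φ ψ ihφ ihψ =>
    exact imp_congr (ihφ w) (ihψ w)
  | box φ ih =>
    constructor
    · intro H h' hm
      replace hm := (K.mem_mmt w h').1 hm
      rw [K.mmt_eq' ((K.qeq h' w).2 hm)]
      exact (ih h').1 (H h' hm)
    · intro H v hv
      have h2 := H v ((K.mem_mmt w v).2 hv)
      rw [K.mmt_eq' ((K.qeq v w).2 hv)] at h2
      exact (ih v).2 h2
  | act a φ ih =>
    have hIH : ∀ v z, K.Rbox v z →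
        ((K.assoc).sat φ (K.mmt v) z ↔ K.satK φ z) := fun v z h => by
      rw [K.mmt_eq' ((K.qeq z v).2 h)]; exact (ih z).symm
    constructor
    · intro H h' hh'
      have hr : K.Ract a w h' := hh'
      exact (hIH w h' (K.ract_sub a w h' hr)).2 (H h' hr)
    · intro H v hv
      exact (hIH w v (K.ract_sub a w v hv)).1 (H v hv)
  | know a φ ih =>
    constructor
    · intro H m' h' he
      rcases m' with u | c | u
      · exact he.elim
      · obtain ⟨-, h2, h3⟩ := he
        subst h2
        exact (ih h').1 (H h' h3)
      · exact he.elim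
    · intro H v hv
      exact (ih v).2 (H (K.mmt v) v ⟨rfl, rfl, hv⟩)
  | obj a φ ih =>
    have hIH : ∀ v z, K.Rbox v z →
        ((K.assoc).sat φ (K.mmt v) z ↔ K.satK φ z) := fun v z h => by
      rw [K.mmt_eq' ((K.qeq z v).2 h)]; exact (ih z).symm
    have hcells := K.cells_mmt a w
    constructor
    · intro H L hLm hex
      rw [hcells] at hLm
      have hsubL := K.cellsK_sub hLm
      obtain ⟨z, hz, hns⟩ := hex
      have hz' : ¬ K.satK φ z := fun h => hns ((hIH w z (hsubL z hz)).2 h)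
      obtain ⟨L', hL', ⟨hd1, hd2⟩, hmin⟩ := H L hLm ⟨z, hz, hz'⟩
      refine ⟨L', by rw [hcells]; exact hL', ⟨(K.domO_mmt a w L L').2 hd1,
        fun h => hd2 ((K.domO_mmt a w L' L).1 h)⟩, ?_⟩
      intro L'' hL''m hd z'' hz''
      rw [hcells] at hL''m
      have hd' : L'' = L' ∨ K.domOK a w L' L'' :=
        hd.imp id (K.domO_mmt a w L' L'').1
      exact (hIH w z'' (K.cellsK_sub hL''m z'' hz'')).2
        (hmin L'' hL''m hd' z'' hz'')
    · intro H L hLm hex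
      have hsubL := K.cellsK_sub hLm
      obtain ⟨z, hz, hns⟩ := hex
      have hz' : ¬ (K.assoc).sat φ (K.mmt w) z :=
        fun h => hns ((hIH w z (hsubL z hz)).1 h)
      obtain ⟨L', hL', ⟨hd1, hd2⟩, hmin⟩ :=
        H L (by rw [hcells]; exact hLm) ⟨z, hz, hz'⟩
      rw [hcells] at hL'
      refine ⟨L', hL', ⟨(K.domO_mmt a w L L').1 hd1,
        fun h => hd2 ((K.domO_mmt a w L' L).2 h)⟩, ?_⟩
      intro L'' hL''m hd z'' hz''
      have hd' := hd.imp id (K.domO_mmt a w L' L'').2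
      exact (hIH w z'' (K.cellsK_sub hL''m z'' hz'')).1
        (hmin L'' (by rw [hcells]; exact hL''m) hd' z'' hz'')
  | subj a φ ih =>
    have hIH : ∀ v z, K.Rbox v z →
        ((K.assoc).sat φ (K.mmt v) z ↔ K.satK φ z) := fun v z h => by
      rw [K.mmt_eq' ((K.qeq z v).2 h)]; exact (ih z).symm
    have hcells := K.cells_mmt a w
    constructor
    · intro H L hLm hex
      rw [hcells] at hLm
      have hsubL := K.cellsK_sub hLm
      obtain ⟨m', hme, z, hz, hns⟩ := hex
      obtain ⟨w', rfl⟩ := K.mEps_form hme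
      rw [K.cluster_mmt hsubL] at hz
      have hz' : ¬ K.satK φ z :=
        fun h => hns ((hIH w' z (K.clusterK_sub z hz)).2 h)
      obtain ⟨L', hL', ⟨hd1, hd2⟩, hmin⟩ :=
        H L hLm ⟨w', (K.mEps_iff a w w').1 hme, z, hz, hz'⟩
      have hsubL' := K.cellsK_sub hL'
      refine ⟨L', by rw [hcells]; exact hL',
        ⟨(K.domS_iff hsubL hsubL').2 hd1,
         fun h => hd2 ((K.domS_iff hsubL' hsubL).1 h)⟩, ?_⟩
      intro L'' hL''m hd m'' hme'' z'' hz''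
      rw [hcells] at hL''m
      have hsubL'' := K.cellsK_sub hL''m
      obtain ⟨w'', rfl⟩ := K.mEps_form hme''
      rw [K.cluster_mmt hsubL''] at hz''
      have hd' : L'' = L' ∨ K.domSK a w L' L'' :=
        hd.imp id (K.domS_iff hsubL' hsubL'').1
      exact (hIH w'' z'' (K.clusterK_sub z'' hz'')).2
        (hmin L'' hL''m hd' w'' ((K.mEps_iff a w w'').1 hme'') z'' hz'')
    · intro H L hLm hex
      have hsubL := K.cellsK_sub hLm
      obtain ⟨w', hme, z, hz, hns⟩ := hex
      have hz' : ¬ (K.assoc).sat φ (K.mmt w') z :=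
        fun h => hns ((hIH w' z (K.clusterK_sub z hz)).1 h)
      obtain ⟨L', hL', ⟨hd1, hd2⟩, hmin⟩ := H L (by rw [hcells]; exact hLm)
        ⟨K.mmt w', (K.mEps_iff a w w').2 hme, z,
         by rw [K.cluster_mmt hsubL]; exact hz, hz'⟩
      rw [hcells] at hL'
      have hsubL' := K.cellsK_sub hL'
      refine ⟨L', hL', ⟨(K.domS_iff hsubL hsubL').1 hd1,
        fun h => hd2 ((K.domS_iff hsubL' hsubL).2 h)⟩, ?_⟩
      intro L'' hL''m hd w'' hme'' z'' hz''
      have hsubL'' := K.cellsK_sub hL''m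
      have hd' := hd.imp id (K.domS_iff hsubL' hsubL'').2
      have hfin := hmin L'' (by rw [hcells]; exact hL''m) hd' (K.mmt w'')
        ((K.mEps_iff a w w'').2 hme'')
      rw [K.cluster_mmt hsubL''] at hfin
      exact (hIH w'' z'' (K.clusterK_sub z'' hz'')).1 (hfin z'' hz'')
end
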